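/- arXiv:1109.6708 — 4 statements merged into one kernel-verified Lean document; each statement's English description precedes it below -/
import Mathlib

section
/- Let k ∈ ℂ with Re k > 0 and Im k > 0, let α ∈ ℂ with Im α ≥ 0, let C > 0, and fix x, x₀ ∈ ℝ and y, y₀ ≥ 0 with y + y₀ > 0. Define φ(λ) = (iα/2π)·e^{−γ(λ)(y+y₀)}·(e^{−(γ(λ)−iα)C}/(γ(λ)−iα))·e^{iλ(x−x₀)}/γ(λ). Then (1/4π)·∫_ℝ e^{−γ(λ)(y+y₀)}·e^{iλ(x−x₀)}/γ(λ) dλ + 2iα·∫_0^C [ (1/4π)·∫_ℝ e^{−γ(λ)(y+y₀+η)}·e^{iλ(x−x₀)}/γ(λ) dλ ]·e^{iαη} dη + ∫_ℝ φ(λ) dλ = (1/4π)·∫_ℝ e^{−γ(λ)(y+y₀)}·((γ(λ)+iα)/(γ(λ)−iα))·e^{iλ(x−x₀)}/γ(λ) dλ, with all integrals converging absolutely. -/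
open MeasureTheory

lemma sqrt_half_sq {w : ℂ} : (w ^ ((1:ℂ)/2)) ^ 2 = w := by
  have h := Complex.cpow_nat_inv_pow w (n := 2) two_ne_zero
  rw [one_div]
  simpa using h

lemma sqrt_half_re_pos {w : ℂ} (hw : w.im < 0) : 0 < (w ^ ((1:ℂ)/2)).re := by
  have hw0 : w ≠ 0 := by intro h; rw [h] at hw; simp at hw
  rw [Complex.cpow_def_of_ne_zero hw0, Complex.exp_re]
  have him : (Complex.log w * ((1:ℂ)/2)).im = w.arg / 2 := by
    simp [Complex.mul_im, Complex.log_im]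
    ring
  rw [him]
  have h1 : -Real.pi < w.arg := Complex.neg_pi_lt_arg w
  have h2 : w.arg < 0 := Complex.arg_neg_iff.mpr hw
  have hπ := Real.pi_pos
  exact mul_pos (Real.exp_pos _)
    (Real.cos_pos_of_mem_Ioo ⟨by linarith, by linarith⟩)

lemma integrable_exp_neg_abs {c : ℝ} (hc : 0 < c) :
    Integrable (fun x : ℝ => Real.exp (-c * |x|)) := by
  have h1 : IntegrableOn (fun x : ℝ => Real.exp (-c * |x|)) (Set.Ioi 0) :=
    ((exp_neg_integrableOn_Ioi 0 hc).congr_fun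
      (fun x hx => by rw [abs_of_pos hx]) measurableSet_Ioi)
  have h1' : IntegrableOn (fun x : ℝ => Real.exp (-c * |x|)) (Set.Ici 0) :=
    (integrableOn_Ici_iff_integrableOn_Ioi (by finiteness)).mpr h1
  have h3 := (MeasurePreserving.integrableOn_comp_preimage
      (Measure.measurePreserving_neg (volume : Measure ℝ))
      (Homeomorph.neg ℝ).measurableEmbedding).2 h1
  have h4 : ((fun x : ℝ => -x) ⁻¹' Set.Ioi (0:ℝ)) = Set.Iio 0 := by
    ext t; simp
  have h2 : IntegrableOn (fun x : ℝ => Real.exp (-c * |x|)) (Set.Iio 0) := by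
    have h5 : IntegrableOn ((fun x : ℝ => Real.exp (-c * |x|)) ∘ (fun x : ℝ => -x))
        (Set.Iio 0) := by rwa [h4] at h3
    exact h5.congr_fun (fun t _ => by simp [Function.comp, abs_neg]) measurableSet_Iio
  have := h2.union h1'
  rwa [Set.Iio_union_Ici, integrableOn_univ] at this

set_option maxHeartbeats 1000000 in
/-- The hybrid representation of the scattered part of the half-space impedance
Helmholtz Green's function: a reflected image (in Sommerfeld form), a finite
segment of real images at depths `2y₀ + η`, `η ∈ [0, C]`, with density
`2iα·e^{iαη}`, plus the rapidly converging Sommerfeld-like integral `∫_ℝ φ`,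
equals the classical spectral representation of the scattered field, with all
integrals converging absolutely. -/
theorem hybrid_representation_eq_spectral (k α : ℂ)
    (hk_re : 0 < k.re) (hk_im : 0 < k.im) (hα : 0 ≤ α.im)
    (C : ℝ) (hC : 0 < C)
    (x x₀ y y₀ : ℝ) (hy : 0 ≤ y) (hy₀ : 0 ≤ y₀) (hyy₀ : 0 < y + y₀)
    (γ : ℝ → ℂ) (hγ : ∀ l : ℝ, γ l = ((l : ℂ) ^ 2 - k ^ 2) ^ ((1 : ℂ) / 2))
    (φ : ℝ → ℂ)
    (hφ : ∀ l : ℝ, φ l = (Complex.I * α / (2 * (Real.pi : ℂ))) *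
      Complex.exp (-γ l * (y + y₀)) *
      (Complex.exp (-(γ l - Complex.I * α) * C) / (γ l - Complex.I * α)) *
      Complex.exp (Complex.I * l * (x - x₀)) / γ l) :
    Integrable (fun l : ℝ =>
      Complex.exp (-γ l * (y + y₀)) *
        Complex.exp (Complex.I * l * (x - x₀)) / γ l) ∧
    (∀ η : ℝ, 0 ≤ η → Integrable (fun l : ℝ =>
      Complex.exp (-γ l * (y + y₀ + η)) *
        Complex.exp (Complex.I * l * (x - x₀)) / γ l)) ∧
    IntervalIntegrable (fun η : ℝ =>
      ((1 / (4 * (Real.pi : ℂ))) * ∫ l : ℝ,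
          Complex.exp (-γ l * (y + y₀ + η)) *
            Complex.exp (Complex.I * l * (x - x₀)) / γ l) *
        Complex.exp (Complex.I * α * η)) MeasureTheory.volume 0 C ∧
    Integrable φ ∧
    Integrable (fun l : ℝ =>
      Complex.exp (-γ l * (y + y₀)) *
        ((γ l + Complex.I * α) / (γ l - Complex.I * α)) *
        Complex.exp (Complex.I * l * (x - x₀)) / γ l) ∧
    (1 / (4 * (Real.pi : ℂ))) * (∫ l : ℝ,
        Complex.exp (-γ l * (y + y₀)) *
          Complex.exp (Complex.I * l * (x - x₀)) / γ l) +
      2 * Complex.I * α * (∫ η in (0 : ℝ)..C,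
        ((1 / (4 * (Real.pi : ℂ))) * ∫ l : ℝ,
            Complex.exp (-γ l * (y + y₀ + η)) *
              Complex.exp (Complex.I * l * (x - x₀)) / γ l) *
          Complex.exp (Complex.I * α * η)) +
      (∫ l : ℝ, φ l) =
      (1 / (4 * (Real.pi : ℂ))) * ∫ l : ℝ,
          Complex.exp (-γ l * (y + y₀)) *
            ((γ l + Complex.I * α) / (γ l - Complex.I * α)) *
            Complex.exp (Complex.I * l * (x - x₀)) / γ l := by
  have hπ : (Real.pi : ℂ) ≠ 0 := Complex.ofReal_ne_zero.mpr Real.pi_ne_zero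
  have hb : 0 < 2 * k.re * k.im := by positivity
  have hwim : ∀ l : ℝ, ((l:ℂ)^2 - k^2).im = -(2 * k.re * k.im) := by
    intro l
    simp [pow_two, Complex.mul_im]
    ring
  have hwre : ∀ l : ℝ, ((l:ℂ)^2 - k^2).re = l^2 - (k^2).re := by
    intro l
    simp [pow_two, Complex.mul_re]
  have hsq : ∀ l : ℝ, γ l ^ 2 = (l:ℂ)^2 - k^2 := fun l => by
    rw [hγ l]; exact sqrt_half_sq
  have hrepos : ∀ l : ℝ, 0 < (γ l).re := fun l => by
    rw [hγ l]
    exact sqrt_half_re_pos (by rw [hwim l]; exact neg_neg_iff_pos.mpr hb)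
  have hγne : ∀ l : ℝ, γ l ≠ 0 := fun l h => by
    have := hrepos l; rw [h] at this; simp at this
  have habs2 : ∀ l : ℝ, ‖γ l‖ ^ 2 = ‖(l:ℂ)^2 - k^2‖ :=
    fun l => by rw [← norm_pow, hsq l]
  have hre2 : ∀ l : ℝ, 2 * (γ l).re ^ 2
      = ‖(l:ℂ)^2 - k^2‖ + ((l:ℂ)^2 - k^2).re := by
    intro l
    have e1 : ((γ l)^2).re = (γ l).re^2 - (γ l).im^2 := by
      simp [pow_two, Complex.mul_re]
    have e2 : (γ l).re^2 + (γ l).im^2 = ‖(l:ℂ)^2 - k^2‖ := by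
      rw [← habs2 l, Complex.sq_norm, Complex.normSq_apply]; ring
    have e3 : ((γ l)^2).re = ((l:ℂ)^2 - k^2).re := by rw [hsq l]
    linarith [e1, e2, e3]
  have hbK : 2 * k.re * k.im ≤ ‖k‖ ^ 2 := by
    rw [Complex.sq_norm, Complex.normSq_apply]
    nlinarith [sq_nonneg (k.re - k.im)]
  have hka : 0 < ‖k‖ := by
    have : k ≠ 0 := fun h => by rw [h] at hk_re; simp at hk_re
    exact norm_pos_iff.mpr this
  have hk2re : (k^2).re ≤ ‖k‖ ^ 2 := by
    have := Complex.re_le_norm (k^2)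
    rwa [norm_pow] at this
  have habs_ge : ∀ l : ℝ, 2 * k.re * k.im ≤ ‖(l:ℂ)^2 - k^2‖ := by
    intro l
    have h := Complex.abs_im_le_norm ((l:ℂ)^2 - k^2)
    rw [hwim l, abs_neg, abs_of_pos hb] at h
    exact h
  have hγabs_lb : ∀ l : ℝ, Real.sqrt (2 * k.re * k.im) ≤ ‖γ l‖ := by
    intro l
    have h : 2 * k.re * k.im ≤ ‖γ l‖ ^ 2 := by
      rw [habs2 l]; exact habs_ge l
    calc Real.sqrt (2 * k.re * k.im) ≤ Real.sqrt (‖γ l‖ ^ 2) :=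
          Real.sqrt_le_sqrt h
      _ = ‖γ l‖ := Real.sqrt_sq (norm_nonneg _)
  have hc0pos : 0 < Real.sqrt ((2*k.re*k.im)^2 / (8 * ‖k‖ ^ 2)) :=
    Real.sqrt_pos.mpr (by positivity)
  have hre_lb : ∀ l : ℝ,
      Real.sqrt ((2*k.re*k.im)^2 / (8 * ‖k‖ ^ 2)) ≤ (γ l).re := by
    intro l
    have hsqabs : ‖(l:ℂ)^2 - k^2‖ ^ 2
        = ((l:ℂ)^2 - k^2).re ^ 2 + (2*k.re*k.im)^2 := by
      rw [Complex.sq_norm, Complex.normSq_apply, hwim l]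
      ring
    have hA0 : 0 ≤ ‖(l:ℂ)^2 - k^2‖ := norm_nonneg _
    have key : (2*k.re*k.im)^2 / (8 * ‖k‖ ^ 2) ≤ (γ l).re ^ 2 := by
      rw [div_le_iff₀ (by positivity)]
      have h2 := hre2 l
      have hge := habs_ge l
      have hwrel := hwre l
      rcases le_or_gt 0 (((l:ℂ)^2 - k^2).re) with h | h
      · nlinarith [hb, hka, hbK]
      · have hl2 : l^2 ≤ ‖k‖ ^ 2 := by nlinarith [sq_nonneg l]
        have hRle : -((l:ℂ)^2 - k^2).re ≤ ‖k‖ ^ 2 := by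
          nlinarith [sq_nonneg l]
        have hAle : ‖(l:ℂ)^2 - k^2‖ ≤ 2 * ‖k‖ ^ 2 := by
          nlinarith [hsqabs, hbK, hb, hka]
        nlinarith [hb, hka]
    calc Real.sqrt ((2*k.re*k.im)^2 / (8 * ‖k‖ ^ 2))
        ≤ Real.sqrt ((γ l).re ^ 2) := Real.sqrt_le_sqrt key
      _ = (γ l).re := Real.sqrt_sq (hrepos l).le
  have hgrow : ∀ l : ℝ, 2 * ‖k‖ ^ 2 ≤ l ^ 2 → l^2/2 ≤ (γ l).re ^ 2 := by
    intro l hl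
    have h2 := hre2 l
    have hwrel := hwre l
    have hRA := Complex.re_le_norm ((l:ℂ)^2 - k^2)
    nlinarith [hk2re]
  -- abbreviations
  set b : ℝ := 2 * k.re * k.im with hbdef
  set c0 : ℝ := Real.sqrt (b^2 / (8 * ‖k‖ ^ 2)) with hc0def
  set a : ℝ := y + y₀ with hadef
  have ha : 0 < a := hyy₀
  have hsb : 0 < Real.sqrt b := Real.sqrt_pos.mpr hb
  -- continuity of γ
  have hγcont : Continuous γ := by
    have hfun : γ = fun l : ℝ => ((l:ℂ)^2 - k^2) ^ ((1:ℂ)/2) := funext hγ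
    rw [hfun]
    apply Continuous.cpow ((Complex.continuous_ofReal.pow 2).sub continuous_const)
      continuous_const
    intro l
    right
    show ((l:ℂ)^2 - k^2).im ≠ 0
    rw [hwim l]
    exact neg_ne_zero.mpr hb.ne'
  -- integrability of the dominating function
  have hPint : Integrable (fun l : ℝ => Real.exp (-(a/2) * (γ l).re)) := by
    have hPcont : Continuous (fun l : ℝ => Real.exp (-(a/2) * (γ l).re)) :=
      Real.continuous_exp.comp (continuous_const.mul (Complex.continuous_re.comp hγcont))
    set R0 : ℝ := Real.sqrt (2 * ‖k‖ ^ 2) with hR0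
    have hbound : Integrable (fun l : ℝ =>
        Real.exp (-(a/2/Real.sqrt 2) * |l|)
          + Set.indicator (Set.Icc (-R0) R0) (fun _ => Real.exp (-(a/2) * c0)) l) := by
      apply Integrable.add
      · exact integrable_exp_neg_abs (div_pos (div_pos ha two_pos) (Real.sqrt_pos.mpr two_pos))
      · rw [integrable_indicator_iff measurableSet_Icc]
        exact (integrableOn_const_iff (by finiteness)).mpr (Or.inr measure_Icc_lt_top)
    apply hbound.mono' hPcont.aestronglyMeasurable
    refine Filter.Eventually.of_forall fun l => ?_
    rw [Real.norm_eq_abs, abs_of_pos (Real.exp_pos _)]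
    rcases le_or_gt |l| R0 with h | h
    · have hmem : l ∈ Set.Icc (-R0) R0 := by
        exact Set.mem_Icc.mpr (abs_le.mp h)
      rw [Set.indicator_of_mem hmem]
      have : Real.exp (-(a/2) * (γ l).re) ≤ Real.exp (-(a/2) * c0) :=
        Real.exp_le_exp.mpr (by nlinarith [hre_lb l, hc0pos, ha])
      have h0 : 0 ≤ Real.exp (-(a/2/Real.sqrt 2) * |l|) := (Real.exp_pos _).le
      linarith
    · have hl2 : 2 * ‖k‖ ^ 2 ≤ l ^ 2 := by
        have h1 : 0 ≤ R0 := Real.sqrt_nonneg _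
        have h2 : R0 ^ 2 ≤ |l| ^ 2 := by nlinarith [abs_nonneg l]
        rwa [Real.sq_sqrt (by positivity), sq_abs] at h2
      have hre2' : l^2/2 ≤ (γ l).re ^ 2 := hgrow l hl2
      have hge : |l| / Real.sqrt 2 ≤ (γ l).re := by
        have h1 : (|l| / Real.sqrt 2) ^ 2 = l^2/2 := by
          rw [div_pow, sq_abs, Real.sq_sqrt (by norm_num : (0:ℝ) ≤ 2)]
        calc |l| / Real.sqrt 2 = Real.sqrt ((|l| / Real.sqrt 2)^2) :=
              (Real.sqrt_sq (by positivity)).symm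
          _ ≤ Real.sqrt ((γ l).re ^ 2) := Real.sqrt_le_sqrt (by rw [h1]; exact hre2')
          _ = (γ l).re := Real.sqrt_sq (hrepos l).le
      have : Real.exp (-(a/2) * (γ l).re) ≤ Real.exp (-(a/2/Real.sqrt 2) * |l|) := by
        apply Real.exp_le_exp.mpr
        rw [neg_mul, neg_mul, neg_le_neg_iff]
        calc a/2/Real.sqrt 2 * |l| = (a/2) * (|l| / Real.sqrt 2) := by ring
          _ ≤ (a/2) * (γ l).re := mul_le_mul_of_nonneg_left hge (by positivity)
      have h0 : 0 ≤ Set.indicator (Set.Icc (-R0) R0)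
          (fun _ => Real.exp (-(a/2) * c0)) l :=
        Set.indicator_nonneg (fun _ _ => (Real.exp_pos _).le) l
      linarith
  -- basic norm facts
  have hnE : ∀ l : ℝ, ‖Complex.exp (Complex.I * l * ((x:ℂ) - x₀))‖ = 1 := by
    intro l
    rw [Complex.norm_exp]
    have : (Complex.I * l * ((x:ℂ) - x₀)).re = 0 := by
      simp [Complex.mul_re, Complex.mul_im]
    rw [this, Real.exp_zero]
  have hnA : ∀ l : ℝ, ‖Complex.exp (-γ l * ((y:ℂ) + y₀))‖
      = Real.exp (-(a * (γ l).re)) := by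
    intro l
    rw [Complex.norm_exp]
    congr 1
    rw [hadef]
    simp [Complex.mul_re]
    ring
  have hnAη : ∀ η l : ℝ, ‖Complex.exp (-γ l * ((y:ℂ) + y₀ + η))‖
      = Real.exp (-((a + η) * (γ l).re)) := by
    intro η l
    rw [Complex.norm_exp]
    congr 1
    rw [hadef]
    simp [Complex.mul_re]
    ring
  have hβre : ∀ l : ℝ, (γ l - Complex.I * α).re = (γ l).re + α.im := by
    intro l
    simp [Complex.sub_re, Complex.mul_re]
  have hβabs : ∀ l : ℝ, c0 ≤ ‖γ l - Complex.I * α‖ := by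
    intro l
    have h1 := Complex.abs_re_le_norm (γ l - Complex.I * α)
    have h2 := hβre l
    have h3 := hre_lb l
    have h4 : (γ l - Complex.I * α).re ≤ |(γ l - Complex.I * α).re| := le_abs_self _
    linarith
  have hβne : ∀ l : ℝ, γ l - Complex.I * α ≠ 0 := by
    intro l h
    have := hβre l
    rw [h] at this
    simp at this
    nlinarith [hre_lb l, hc0pos]
  have hnC : ∀ l : ℝ, ‖Complex.exp (-(γ l - Complex.I * α) * C)‖ ≤ 1 := by
    intro l
    rw [Complex.norm_exp]
    rw [show (1:ℝ) = Real.exp 0 from (Real.exp_zero).symm]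
    apply Real.exp_le_exp.mpr
    have : (-(γ l - Complex.I * α) * (C:ℂ)).re = -(((γ l).re + α.im) * C) := by
      rw [Complex.mul_re, Complex.neg_re, Complex.neg_im, hβre l,
        Complex.ofReal_re, Complex.ofReal_im]
      ring
    rw [this]
    nlinarith [hrepos l, hC]
  -- decay comparisons
  have hdecay : ∀ η : ℝ, -(a/2) ≤ η → ∀ l : ℝ,
      Real.exp (-((a + η) * (γ l).re)) ≤ Real.exp (-(a/2) * (γ l).re) := by
    intro η hη l
    apply Real.exp_le_exp.mpr
    nlinarith [hrepos l]
  have hdecay0 : ∀ l : ℝ,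
      Real.exp (-(a * (γ l).re)) ≤ Real.exp (-(a/2) * (γ l).re) := by
    intro l
    apply Real.exp_le_exp.mpr
    nlinarith [hrepos l]
  -- master integrability criterion
  have key : ∀ (f : ℝ → ℂ) (c : ℝ), Continuous f →
      (∀ l, ‖f l‖ ≤ c * Real.exp (-(a/2) * (γ l).re)) → Integrable f := by
    intro f c hcont hbd
    exact (hPint.const_mul c).mono' hcont.aestronglyMeasurable
      (Filter.Eventually.of_forall hbd)
  -- continuity pieces
  have hcE : Continuous fun l : ℝ => Complex.exp (Complex.I * l * ((x:ℂ) - x₀)) := by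
    apply Complex.continuous_exp.comp
    exact (continuous_const.mul Complex.continuous_ofReal).mul continuous_const
  have hcA : Continuous fun l : ℝ => Complex.exp (-γ l * ((y:ℂ) + y₀)) :=
    Complex.continuous_exp.comp (hγcont.neg.mul continuous_const)
  -- the uniform bound for the depth-(y+y₀+η) integrands
  have hGbound : ∀ η : ℝ, -(a/2) ≤ η → ∀ l : ℝ,
      ‖Complex.exp (-γ l * (y + y₀ + η)) *
        Complex.exp (Complex.I * l * (x - x₀)) / γ l‖
        ≤ (Real.sqrt b)⁻¹ * Real.exp (-(a/2) * (γ l).re) := by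
    intro η hη l
    rw [norm_div, norm_mul, hnAη η l, hnE l, mul_one]
    rw [inv_mul_eq_div]
    exact div_le_div₀ (Real.exp_pos _).le (hdecay η hη l) hsb (hγabs_lb l)
  -- integrand 1
  have hIg : Integrable (fun l : ℝ =>
      Complex.exp (-γ l * (y + y₀)) * Complex.exp (Complex.I * l * (x - x₀)) / γ l) := by
    apply key _ ((Real.sqrt b)⁻¹)
    · exact ((hcA.mul hcE).div hγcont hγne)
    · intro l
      rw [norm_div, norm_mul, hnA l, hnE l, mul_one]
      rw [inv_mul_eq_div]
      exact div_le_div₀ (Real.exp_pos _).le (hdecay0 l) hsb (hγabs_lb l)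
  -- integrand for each η ≥ 0
  have hIgη : ∀ η : ℝ, 0 ≤ η → Integrable (fun l : ℝ =>
      Complex.exp (-γ l * (y + y₀ + η)) * Complex.exp (Complex.I * l * (x - x₀)) / γ l) := by
    intro η hη
    apply key _ ((Real.sqrt b)⁻¹)
    · exact (((Complex.continuous_exp.comp (hγcont.neg.mul continuous_const)).mul hcE).div
        hγcont hγne)
    · exact hGbound η (by linarith)
  -- integrand ψ  (= 4π·φ)
  have hIψ : Integrable (fun l : ℝ =>
      (2 * Complex.I * α) * (Complex.exp (-γ l * (y + y₀)) *
        (Complex.exp (-(γ l - Complex.I * α) * C) / (γ l - Complex.I * α)) *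
        Complex.exp (Complex.I * l * (x - x₀)) / γ l)) := by
    apply key _ (2 * ‖α‖ * ((c0 * Real.sqrt b)⁻¹))
    · apply continuous_const.mul
      apply Continuous.div _ hγcont hγne
      apply Continuous.mul _ hcE
      apply hcA.mul
      exact (Complex.continuous_exp.comp ((hγcont.sub continuous_const).neg.mul
        continuous_const)).div (hγcont.sub continuous_const) hβne
    · intro l
      rw [norm_mul]
      have hc' : ‖(2 : ℂ) * Complex.I * α‖ = 2 * ‖α‖ := by simp
      have hX : ‖Complex.exp (-γ l * ((y:ℂ) + y₀)) *
          (Complex.exp (-(γ l - Complex.I * α) * C) / (γ l - Complex.I * α)) *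
          Complex.exp (Complex.I * l * ((x:ℂ) - x₀)) / γ l‖
          = Real.exp (-(a * (γ l).re)) *
            (‖Complex.exp (-(γ l - Complex.I * α) * C)‖
              / ‖γ l - Complex.I * α‖) / ‖γ l‖ := by
        rw [norm_div, norm_mul, norm_mul, norm_div]
        rw [hnA l, hnE l, mul_one]
      rw [hc', hX]
      have h1 : ‖Complex.exp (-(γ l - Complex.I * α) * C)‖
          / ‖γ l - Complex.I * α‖ ≤ c0⁻¹ := by
        rw [div_le_iff₀ (lt_of_lt_of_le hc0pos (hβabs l))]
        calc ‖Complex.exp (-(γ l - Complex.I * α) * C)‖ ≤ 1 := hnC l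
          _ = c0⁻¹ * c0 := by field_simp
          _ ≤ c0⁻¹ * ‖γ l - Complex.I * α‖ :=
              mul_le_mul_of_nonneg_left (hβabs l) (by positivity)
      have h2 : Real.exp (-(a * (γ l).re)) *
            (‖Complex.exp (-(γ l - Complex.I * α) * C)‖
              / ‖γ l - Complex.I * α‖) / ‖γ l‖
          ≤ Real.exp (-(a/2) * (γ l).re) * c0⁻¹ / Real.sqrt b := by
        apply div_le_div₀ (by positivity)
        · exact mul_le_mul (hdecay0 l) h1 (by positivity) (Real.exp_pos _).le
        · exact hsb
        · exact hγabs_lb l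
      calc 2 * ‖α‖ * (Real.exp (-(a * (γ l).re)) *
            (‖Complex.exp (-(γ l - Complex.I * α) * C)‖
              / ‖γ l - Complex.I * α‖) / ‖γ l‖)
          ≤ 2 * ‖α‖ * (Real.exp (-(a/2) * (γ l).re) * c0⁻¹ / Real.sqrt b) :=
            mul_le_mul_of_nonneg_left h2 (by positivity)
        _ = 2 * ‖α‖ * (c0 * Real.sqrt b)⁻¹ * Real.exp (-(a/2) * (γ l).re) := by
            field_simp
  -- classical integrand
  have hIcl : Integrable (fun l : ℝ =>
      Complex.exp (-γ l * (y + y₀)) *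
        ((γ l + Complex.I * α) / (γ l - Complex.I * α)) *
        Complex.exp (Complex.I * l * (x - x₀)) / γ l) := by
    apply key _ ((1 + ‖α‖ / Real.sqrt b) / c0)
    · apply Continuous.div _ hγcont hγne
      apply Continuous.mul _ hcE
      apply hcA.mul
      exact ((hγcont.add continuous_const).div (hγcont.sub continuous_const) hβne)
    · intro l
      rw [norm_div, norm_mul, norm_mul, norm_div]
      rw [hnA l, hnE l, mul_one]
      have hratio : ‖γ l + Complex.I * α‖ / ‖γ l - Complex.I * α‖
            / ‖γ l‖
          ≤ (1 + ‖α‖ / Real.sqrt b) / c0 := by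
        have hnum : ‖γ l + Complex.I * α‖
            ≤ ‖γ l‖ + ‖α‖ := by
          calc ‖γ l + Complex.I * α‖
              ≤ ‖γ l‖ + ‖Complex.I * α‖ :=
                norm_add_le _ _
            _ = ‖γ l‖ + ‖α‖ := by simp [map_mul]
        have hγpos : 0 < ‖γ l‖ := lt_of_lt_of_le hsb (hγabs_lb l)
        have hβpos : 0 < ‖γ l - Complex.I * α‖ :=
          lt_of_lt_of_le hc0pos (hβabs l)
        rw [div_div, div_le_div_iff₀ (by positivity) hc0pos]
        have step1 : ‖γ l + Complex.I * α‖ * c0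
            ≤ (‖γ l‖ + ‖α‖) * c0 :=
          mul_le_mul_of_nonneg_right hnum hc0pos.le
        have step2 : (‖γ l‖ + ‖α‖) * c0
            ≤ (1 + ‖α‖ / Real.sqrt b) *
              (‖γ l - Complex.I * α‖ * ‖γ l‖) := by
          have e1 : (1 + ‖α‖ / Real.sqrt b) *
              (‖γ l - Complex.I * α‖ * ‖γ l‖)
              ≥ (1 + ‖α‖ / Real.sqrt b) * (c0 * ‖γ l‖) := by
            apply mul_le_mul_of_nonneg_left _ (by positivity)
            exact mul_le_mul_of_nonneg_right (hβabs l) hγpos.le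
          have e2 : (1 + ‖α‖ / Real.sqrt b) * (c0 * ‖γ l‖)
              ≥ (‖γ l‖ + ‖α‖) * c0 := by
            have e3 : ‖α‖ * ‖γ l‖ / Real.sqrt b ≥ ‖α‖ := by
              rw [ge_iff_le, le_div_iff₀ hsb]
              exact mul_le_mul_of_nonneg_left (hγabs_lb l) (norm_nonneg _)
            calc (1 + ‖α‖ / Real.sqrt b) * (c0 * ‖γ l‖)
                = (‖γ l‖ + ‖α‖ * ‖γ l‖ / Real.sqrt b) * c0 := by
                  ring
              _ ≥ (‖γ l‖ + ‖α‖) * c0 := by nlinarith [hc0pos]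
          linarith
        linarith
      calc Real.exp (-(a * (γ l).re)) *
            (‖γ l + Complex.I * α‖ / ‖γ l - Complex.I * α‖)
            / ‖γ l‖
          = Real.exp (-(a * (γ l).re)) *
            (‖γ l + Complex.I * α‖ / ‖γ l - Complex.I * α‖
              / ‖γ l‖) := by ring
        _ ≤ Real.exp (-(a/2) * (γ l).re) * ((1 + ‖α‖ / Real.sqrt b) / c0) := by
            apply mul_le_mul (hdecay0 l) hratio _ (Real.exp_pos _).le
            positivity
        _ = (1 + ‖α‖ / Real.sqrt b) / c0 * Real.exp (-(a/2) * (γ l).re) := by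
            ring
  -- Integrable φ
  have hφψ : ∀ l : ℝ, φ l = (1 / (4 * (Real.pi : ℂ))) *
      ((2 * Complex.I * α) * (Complex.exp (-γ l * (y + y₀)) *
        (Complex.exp (-(γ l - Complex.I * α) * C) / (γ l - Complex.I * α)) *
        Complex.exp (Complex.I * l * (x - x₀)) / γ l)) := by
    intro l
    have hc : (Complex.I * α / (2 * (Real.pi : ℂ)))
        = (1 / (4 * (Real.pi : ℂ))) * (2 * Complex.I * α) := by
      field_simp
      ring
    rw [hφ l, hc]
    ring
  have hIφ : Integrable φ :=
    (hIψ.const_mul (1 / (4 * (Real.pi : ℂ)))).congr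
      (Filter.Eventually.of_forall fun l => (hφψ l).symm)
  -- the pointwise identity
  have hpt : ∀ l : ℝ,
      Complex.exp (-γ l * (y + y₀)) *
        ((γ l + Complex.I * α) / (γ l - Complex.I * α)) *
        Complex.exp (Complex.I * l * (x - x₀)) / γ l
      = Complex.exp (-γ l * (y + y₀)) *
          Complex.exp (Complex.I * l * (x - x₀)) / γ l
        + (∫ η in Set.Ioc (0:ℝ) C,
            (2 * Complex.I * α * Complex.exp (Complex.I * α * η)) *
              (Complex.exp (-γ l * (y + y₀ + η)) *
                Complex.exp (Complex.I * l * (x - x₀)) / γ l))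
        + (2 * Complex.I * α) * (Complex.exp (-γ l * (y + y₀)) *
            (Complex.exp (-(γ l - Complex.I * α) * C) / (γ l - Complex.I * α)) *
            Complex.exp (Complex.I * l * (x - x₀)) / γ l) := by
    intro l
    have hβ := hβne l
    have hγn := hγne l
    have hint : (∫ η in Set.Ioc (0:ℝ) C,
        (2 * Complex.I * α * Complex.exp (Complex.I * α * η)) *
          (Complex.exp (-γ l * (y + y₀ + η)) *
            Complex.exp (Complex.I * l * (x - x₀)) / γ l))
        = (2 * Complex.I * α) * (Complex.exp (-γ l * ((y:ℂ) + y₀)) *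
            Complex.exp (Complex.I * l * ((x:ℂ) - x₀)) / γ l) *
          ((1 - Complex.exp (-(γ l - Complex.I * α) * C)) / (γ l - Complex.I * α)) := by
      rw [← intervalIntegral.integral_of_le hC.le]
      have heq : (fun η : ℝ => (2 * Complex.I * α * Complex.exp (Complex.I * α * η)) *
          (Complex.exp (-γ l * ((y:ℂ) + y₀ + η)) *
            Complex.exp (Complex.I * l * ((x:ℂ) - x₀)) / γ l))
          = fun η : ℝ => ((2 * Complex.I * α) * (Complex.exp (-γ l * ((y:ℂ) + y₀)) *
              Complex.exp (Complex.I * l * ((x:ℂ) - x₀)) / γ l)) *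
            Complex.exp ((-(γ l - Complex.I * α)) * η) := by
        funext η
        have e1 : Complex.exp (-γ l * ((y:ℂ) + y₀ + η))
            = Complex.exp (-γ l * ((y:ℂ) + y₀)) * Complex.exp (-γ l * η) := by
          rw [← Complex.exp_add]; congr 1; ring
        have e2 : Complex.exp ((-(γ l - Complex.I * α)) * (η:ℂ))
            = Complex.exp (Complex.I * α * η) * Complex.exp (-γ l * η) := by
          rw [← Complex.exp_add]; congr 1; ring
        rw [e1, e2]; ring
      rw [heq, intervalIntegral.integral_const_mul,
        integral_exp_mul_complex (neg_ne_zero.mpr hβ)]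
      rw [Complex.ofReal_zero, mul_zero, Complex.exp_zero]
      congr 1
      rw [div_neg, ← neg_div, neg_sub]
    rw [hint]
    field_simp
    ring
  -- continuity of the η-integrand family in l, for each η
  have hcontl : ∀ η : ℝ, Continuous (fun l : ℝ =>
      Complex.exp (-γ l * (y + y₀ + η)) *
        Complex.exp (Complex.I * l * (x - x₀)) / γ l) := by
    intro η
    apply Continuous.div _ hγcont hγne
    apply Continuous.mul
    · exact Complex.continuous_exp.comp (hγcont.neg.mul continuous_const)
    · exact Complex.continuous_exp.comp
        ((continuous_const.mul Complex.continuous_ofReal).mul continuous_const)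
  -- continuity of the inner integral as a function of η
  have hFcont : ∀ η₀ : ℝ, -(a/2) < η₀ → ContinuousAt (fun η : ℝ => ∫ l : ℝ,
      Complex.exp (-γ l * (y + y₀ + η)) *
        Complex.exp (Complex.I * l * (x - x₀)) / γ l) η₀ := by
    intro η₀ hη₀
    apply continuousAt_of_dominated
      (bound := fun l : ℝ => (Real.sqrt b)⁻¹ * Real.exp (-(a/2) * (γ l).re))
    · exact Filter.Eventually.of_forall fun η => (hcontl η).aestronglyMeasurable
    · have hev : ∀ᶠ η in nhds η₀, η ∈ Set.Ioi (-(a/2)) :=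
        isOpen_Ioi.eventually_mem hη₀
      filter_upwards [hev] with η hη
      exact Filter.Eventually.of_forall fun l => hGbound η (le_of_lt hη) l
    · exact hPint.const_mul _
    · refine Filter.Eventually.of_forall fun l => ?_
      apply Continuous.continuousAt
      apply Continuous.div _ continuous_const (fun _ => hγne l)
      apply Continuous.mul _ continuous_const
      apply Complex.continuous_exp.comp
      exact continuous_const.mul
        ((continuous_const.add Complex.continuous_ofReal))
  -- interval integrability
  have hI3 : IntervalIntegrable (fun η : ℝ =>
      ((1 / (4 * (Real.pi : ℂ))) * ∫ l : ℝ,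
          Complex.exp (-γ l * (y + y₀ + η)) *
            Complex.exp (Complex.I * l * (x - x₀)) / γ l) *
        Complex.exp (Complex.I * α * η)) MeasureTheory.volume 0 C := by
    apply ContinuousOn.intervalIntegrable
    intro η hη
    have hη' : η ∈ Set.Icc 0 C := by rwa [Set.uIcc_of_le hC.le] at hη
    apply ContinuousAt.continuousWithinAt
    apply ContinuousAt.mul
    · exact continuousAt_const.mul (hFcont η (by nlinarith [hη'.1]))
    · exact (Complex.continuous_exp.comp
        (continuous_const.mul Complex.continuous_ofReal)).continuousAt
  refine ⟨hIg, hIgη, hI3, hIφ, hIcl, ?_⟩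
  -- the main identity
  haveI hfin : IsFiniteMeasure (volume.restrict (Set.Ioc (0:ℝ) C)) :=
    ⟨by rw [Measure.restrict_apply_univ]; exact measure_Ioc_lt_top⟩
  have hUcont : Continuous (fun p : ℝ × ℝ =>
      (2 * Complex.I * α * Complex.exp (Complex.I * α * p.2)) *
        (Complex.exp (-γ p.1 * (y + y₀ + p.2)) *
          Complex.exp (Complex.I * p.1 * (x - x₀)) / γ p.1)) := by
    apply Continuous.mul
    · exact continuous_const.mul (Complex.continuous_exp.comp
        (continuous_const.mul (Complex.continuous_ofReal.comp continuous_snd)))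
    · apply Continuous.div _ (hγcont.comp continuous_fst) (fun p => hγne p.1)
      apply Continuous.mul
      · apply Complex.continuous_exp.comp
        exact ((hγcont.comp continuous_fst).neg.mul
          ((continuous_const.add continuous_const).add
            (Complex.continuous_ofReal.comp continuous_snd)))
      · apply Complex.continuous_exp.comp
        exact (continuous_const.mul
          (Complex.continuous_ofReal.comp continuous_fst)).mul continuous_const
  have hUint : Integrable (fun p : ℝ × ℝ =>
      (2 * Complex.I * α * Complex.exp (Complex.I * α * p.2)) *
        (Complex.exp (-γ p.1 * (y + y₀ + p.2)) *
          Complex.exp (Complex.I * p.1 * (x - x₀)) / γ p.1))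
      ((volume : Measure ℝ).prod (volume.restrict (Set.Ioc 0 C))) := by
    have hbd := Integrable.mul_prod (μ := (volume : Measure ℝ))
      (ν := volume.restrict (Set.Ioc 0 C))
      (hPint.const_mul ((2 * ‖α‖) * (Real.sqrt b)⁻¹))
      (integrable_const (1:ℝ))
    apply hbd.mono' hUcont.aestronglyMeasurable
    have hae : ∀ᵐ p : ℝ × ℝ
        ∂((volume : Measure ℝ).prod (volume.restrict (Set.Ioc 0 C))),
        p.2 ∈ Set.Ioc (0:ℝ) C := by
      refine (Measure.ae_prod_iff_ae_ae ?_).mpr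
        (Filter.Eventually.of_forall fun l => ae_restrict_mem measurableSet_Ioc)
      exact measurable_snd measurableSet_Ioc
    filter_upwards [hae] with p hp
    have h1 : ‖(2 : ℂ) * Complex.I * α * Complex.exp (Complex.I * α * p.2)‖
        ≤ 2 * ‖α‖ := by
      rw [norm_mul]
      have e1 : ‖(2 : ℂ) * Complex.I * α‖ = 2 * ‖α‖ := by simp
      have e2 : ‖Complex.exp (Complex.I * α * (p.2:ℂ))‖ ≤ 1 := by
        rw [Complex.norm_exp]
        rw [show (1:ℝ) = Real.exp 0 from (Real.exp_zero).symm]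
        apply Real.exp_le_exp.mpr
        have : (Complex.I * α * (p.2:ℂ)).re = -α.im * p.2 := by
          simp [Complex.mul_re, Complex.mul_im]
        rw [this]
        nlinarith [hp.1, hα]
      calc ‖(2 : ℂ) * Complex.I * α‖ * ‖Complex.exp (Complex.I * α * (p.2:ℂ))‖
          ≤ ‖(2 : ℂ) * Complex.I * α‖ * 1 :=
            mul_le_mul_of_nonneg_left e2 (norm_nonneg _)
        _ = 2 * ‖α‖ := by rw [mul_one, e1]
    have h2 := hGbound p.2 (by nlinarith [hp.1, ha]) p.1
    calc ‖(2 : ℂ) * Complex.I * α * Complex.exp (Complex.I * α * p.2) *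
          (Complex.exp (-γ p.1 * (y + y₀ + p.2)) *
            Complex.exp (Complex.I * p.1 * (x - x₀)) / γ p.1)‖
        = ‖(2 : ℂ) * Complex.I * α * Complex.exp (Complex.I * α * p.2)‖ *
          ‖Complex.exp (-γ p.1 * (y + y₀ + p.2)) *
            Complex.exp (Complex.I * p.1 * (x - x₀)) / γ p.1‖ := norm_mul _ _
      _ ≤ (2 * ‖α‖) *
          ((Real.sqrt b)⁻¹ * Real.exp (-(a/2) * (γ p.1).re)) :=
          mul_le_mul h1 h2 (norm_nonneg _) (by positivity)
      _ = 2 * ‖α‖ * (Real.sqrt b)⁻¹ * Real.exp (-(a/2) * (γ p.1).re) * 1 := by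
          ring
  have hswap := MeasureTheory.integral_integral_swap
    (μ := (volume : Measure ℝ)) (ν := volume.restrict (Set.Ioc 0 C))
    (f := fun l η =>
      (2 * Complex.I * α * Complex.exp (Complex.I * α * η)) *
        (Complex.exp (-γ l * (y + y₀ + η)) *
          Complex.exp (Complex.I * l * (x - x₀)) / γ l)) hUint
  have hmarg : Integrable (fun l : ℝ => ∫ η in Set.Ioc (0:ℝ) C,
      (2 * Complex.I * α * Complex.exp (Complex.I * α * η)) *
        (Complex.exp (-γ l * (y + y₀ + η)) *
          Complex.exp (Complex.I * l * (x - x₀)) / γ l)) :=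
    hUint.integral_prod_left
  have hintφ : (∫ l : ℝ, φ l) = (1 / (4 * (Real.pi : ℂ))) *
      ∫ l : ℝ, (2 * Complex.I * α) * (Complex.exp (-γ l * (y + y₀)) *
        (Complex.exp (-(γ l - Complex.I * α) * C) / (γ l - Complex.I * α)) *
        Complex.exp (Complex.I * l * (x - x₀)) / γ l) := by
    rw [integral_congr_ae (Filter.Eventually.of_forall hφψ)]
    exact integral_const_mul _ _
  have hmid : 2 * Complex.I * α * (∫ η in (0 : ℝ)..C,
      ((1 / (4 * (Real.pi : ℂ))) * ∫ l : ℝ,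
          Complex.exp (-γ l * (y + y₀ + η)) *
            Complex.exp (Complex.I * l * (x - x₀)) / γ l) *
        Complex.exp (Complex.I * α * η))
      = (1 / (4 * (Real.pi : ℂ))) * ∫ l : ℝ, (∫ η in Set.Ioc (0:ℝ) C,
          (2 * Complex.I * α * Complex.exp (Complex.I * α * η)) *
            (Complex.exp (-γ l * (y + y₀ + η)) *
              Complex.exp (Complex.I * l * (x - x₀)) / γ l)) := by
    rw [intervalIntegral.integral_of_le hC.le]
    calc 2 * Complex.I * α * (∫ η in Set.Ioc (0:ℝ) C,
          ((1 / (4 * (Real.pi : ℂ))) * ∫ l : ℝ,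
              Complex.exp (-γ l * (y + y₀ + η)) *
                Complex.exp (Complex.I * l * (x - x₀)) / γ l) *
            Complex.exp (Complex.I * α * η))
        = ∫ η in Set.Ioc (0:ℝ) C, (2 * Complex.I * α) *
            (((1 / (4 * (Real.pi : ℂ))) * ∫ l : ℝ,
              Complex.exp (-γ l * (y + y₀ + η)) *
                Complex.exp (Complex.I * l * (x - x₀)) / γ l) *
            Complex.exp (Complex.I * α * η)) := (integral_const_mul _ _).symm
      _ = ∫ η in Set.Ioc (0:ℝ) C, (1 / (4 * (Real.pi : ℂ))) *
            ((2 * Complex.I * α * Complex.exp (Complex.I * α * η)) *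
              ∫ l : ℝ, Complex.exp (-γ l * (y + y₀ + η)) *
                Complex.exp (Complex.I * l * (x - x₀)) / γ l) :=
          integral_congr_ae (Filter.Eventually.of_forall fun η => by ring)
      _ = (1 / (4 * (Real.pi : ℂ))) * ∫ η in Set.Ioc (0:ℝ) C,
            ((2 * Complex.I * α * Complex.exp (Complex.I * α * η)) *
              ∫ l : ℝ, Complex.exp (-γ l * (y + y₀ + η)) *
                Complex.exp (Complex.I * l * (x - x₀)) / γ l) :=
          integral_const_mul _ _
      _ = (1 / (4 * (Real.pi : ℂ))) * ∫ η in Set.Ioc (0:ℝ) C, (∫ l : ℝ,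
            (2 * Complex.I * α * Complex.exp (Complex.I * α * η)) *
              (Complex.exp (-γ l * (y + y₀ + η)) *
                Complex.exp (Complex.I * l * (x - x₀)) / γ l)) := by
          congr 1
          exact integral_congr_ae (Filter.Eventually.of_forall fun η =>
            (integral_const_mul _ _).symm)
      _ = (1 / (4 * (Real.pi : ℂ))) * ∫ l : ℝ, (∫ η in Set.Ioc (0:ℝ) C,
            (2 * Complex.I * α * Complex.exp (Complex.I * α * η)) *
              (Complex.exp (-γ l * (y + y₀ + η)) *
                Complex.exp (Complex.I * l * (x - x₀)) / γ l)) := by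
          rw [hswap]
  rw [hintφ, hmid, ← mul_add, ← mul_add]
  congr 1
  calc (∫ l : ℝ, Complex.exp (-γ l * (y + y₀)) *
          Complex.exp (Complex.I * l * (x - x₀)) / γ l)
        + (∫ l : ℝ, ∫ η in Set.Ioc (0:ℝ) C,
            (2 * Complex.I * α * Complex.exp (Complex.I * α * η)) *
              (Complex.exp (-γ l * (y + y₀ + η)) *
                Complex.exp (Complex.I * l * (x - x₀)) / γ l))
        + (∫ l : ℝ, (2 * Complex.I * α) * (Complex.exp (-γ l * (y + y₀)) *
            (Complex.exp (-(γ l - Complex.I * α) * C) / (γ l - Complex.I * α)) *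
            Complex.exp (Complex.I * l * (x - x₀)) / γ l))
      = (∫ l : ℝ, (Complex.exp (-γ l * (y + y₀)) *
          Complex.exp (Complex.I * l * (x - x₀)) / γ l
        + ∫ η in Set.Ioc (0:ℝ) C,
            (2 * Complex.I * α * Complex.exp (Complex.I * α * η)) *
              (Complex.exp (-γ l * (y + y₀ + η)) *
                Complex.exp (Complex.I * l * (x - x₀)) / γ l)))
        + (∫ l : ℝ, (2 * Complex.I * α) * (Complex.exp (-γ l * (y + y₀)) *
            (Complex.exp (-(γ l - Complex.I * α) * C) / (γ l - Complex.I * α)) *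
            Complex.exp (Complex.I * l * (x - x₀)) / γ l)) := by
        rw [integral_add hIg hmarg]
    _ = ∫ l : ℝ, (Complex.exp (-γ l * (y + y₀)) *
          Complex.exp (Complex.I * l * (x - x₀)) / γ l
        + (∫ η in Set.Ioc (0:ℝ) C,
            (2 * Complex.I * α * Complex.exp (Complex.I * α * η)) *
              (Complex.exp (-γ l * (y + y₀ + η)) *
                Complex.exp (Complex.I * l * (x - x₀)) / γ l))
        + (2 * Complex.I * α) * (Complex.exp (-γ l * (y + y₀)) *
            (Complex.exp (-(γ l - Complex.I * α) * C) / (γ l - Complex.I * α)) *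
            Complex.exp (Complex.I * l * (x - x₀)) / γ l)) :=
        (integral_add (hIg.add hmarg) hIψ).symm
    _ = ∫ l : ℝ, Complex.exp (-γ l * (y + y₀)) *
          ((γ l + Complex.I * α) / (γ l - Complex.I * α)) *
          Complex.exp (Complex.I * l * (x - x₀)) / γ l :=
        integral_congr_ae (Filter.Eventually.of_forall fun l => (hpt l).symm)
end

section
/- Let k ∈ ℂ with Re k > 0 and Im k > 0, let α ∈ ℂ with Im α ≥ 0, let C > 0, let x, x₀ ∈ ℝ and y, y₀ ≥ 0, and define φ(λ) = (iα/2π)·e^{−γ(λ)(y+y₀)}·(e^{−(γ(λ)−iα)C}/(γ(λ)−iα))·e^{iλ(x−x₀)}/γ(λ). Then for every λ ∈ ℝ with λ² ≥ 2|k|², one has |φ(λ)| ≤ (2|α|/(π·λ²))·e^{−C|λ|/2}. In particular the bound is independent of x, x₀, y, and y₀. -/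
private lemma sommerfeld_aux (A R D G L E1 E2 yy Cc pi : ℝ)
    (hA : 0 ≤ A) (hπ : 0 < pi) (hL : 0 < L) (hR : L / 2 ≤ R)
    (hD : L / 2 ≤ D) (hG : L / 2 ≤ G)
    (hE1 : E1 ≤ 1) (hE1' : 0 ≤ E1) (hE2' : 0 ≤ E2)
    (hE2 : E2 ≤ Real.exp (-Cc * L / 2)) :
    A / (2 * pi) * E1 * (E2 / D) * 1 / G ≤
      2 * A / (pi * L ^ 2) * Real.exp (-Cc * L / 2) := by
  have hD0 : 0 < D := lt_of_lt_of_le (by linarith) hD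
  have hG0 : 0 < G := lt_of_lt_of_le (by linarith) hG
  calc A / (2 * pi) * E1 * (E2 / D) * 1 / G
      ≤ A / (2 * pi) * 1 * (Real.exp (-Cc * L / 2) / (L / 2)) * 1 / (L / 2) := by
        gcongr
    _ = 2 * A / (pi * L ^ 2) * Real.exp (-Cc * L / 2) := by
        field_simp


/-- The integrand `φ` of the Sommerfeld-like integral in the hybrid
representation decays exponentially once `λ² ≥ 2|k|²`:
`|φ(λ)| ≤ (2|α|/(π·λ²))·e^{−C|λ|/2}`, uniformly in `x, x₀` and in the heights
`y, y₀ ≥ 0` of target and source above the interface. -/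
theorem sommerfeld_tail_integrand_bound (k α : ℂ)
    (hk_re : 0 < k.re) (hk_im : 0 < k.im) (hα : 0 ≤ α.im)
    (C : ℝ) (hC : 0 < C)
    (x x₀ y y₀ : ℝ) (hy : 0 ≤ y) (hy₀ : 0 ≤ y₀)
    (γ : ℝ → ℂ) (hγ : ∀ l : ℝ, γ l = ((l : ℂ) ^ 2 - k ^ 2) ^ ((1 : ℂ) / 2))
    (φ : ℝ → ℂ)
    (hφ : ∀ l : ℝ, φ l = (Complex.I * α / (2 * (Real.pi : ℂ))) *
      Complex.exp (-γ l * (y + y₀)) *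
      (Complex.exp (-(γ l - Complex.I * α) * C) / (γ l - Complex.I * α)) *
      Complex.exp (Complex.I * l * (x - x₀)) / γ l)
    (l : ℝ) (hl : 2 * ‖k‖ ^ 2 ≤ l ^ 2) :
    ‖φ l‖ ≤
      (2 * ‖α‖ / (Real.pi * l ^ 2)) * Real.exp (-C * |l| / 2) := by
  have hπ := Real.pi_pos
  have hk0 : k ≠ 0 := fun h => by simp [h] at hk_re
  have hka : 0 < ‖k‖ := by simpa using hk0
  have hl2 : 0 < l ^ 2 := lt_of_lt_of_le (mul_pos two_pos (pow_pos hka 2)) hl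
  have hl0 : l ≠ 0 := by intro h; rw [h] at hl2; simp at hl2
  have hlabs : 0 < |l| := abs_pos.mpr hl0
  set z : ℂ := (l : ℂ) ^ 2 - k ^ 2 with hz
  have hkabs2 : ‖k‖ ^ 2 = k.re ^ 2 + k.im ^ 2 := by
    rw [Complex.sq_norm, Complex.normSq_apply]; ring
  have hzre : l ^ 2 / 2 ≤ z.re := by
    have h1 : z.re = l ^ 2 - (k.re ^ 2 - k.im ^ 2) := by
      simp [hz, pow_two, Complex.mul_re, Complex.sub_re]
    nlinarith [sq_nonneg k.im]
  have hz0 : z ≠ 0 := by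
    intro h
    rw [h] at hzre
    simp at hzre
    nlinarith
  have hγd : γ l = Complex.exp (Complex.log z * (1 / 2)) := by
    rw [hγ l, Complex.cpow_def_of_ne_zero hz0]
  have hsq : γ l * γ l = z := by
    rw [hγd, ← Complex.exp_add]
    rw [show Complex.log z * (1/2) + Complex.log z * (1/2) = Complex.log z by ring]
    exact Complex.exp_log hz0
  have habs2 : ‖γ l‖ ^ 2 = ‖z‖ := by
    rw [sq, ← norm_mul, hsq]
  have hre0 : 0 ≤ (γ l).re := by
    rw [hγd, Complex.exp_re]
    apply mul_nonneg (Real.exp_pos _).le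
    have him : (Complex.log z * (1/2)).im = Complex.arg z / 2 := by
      simp [Complex.mul_im, Complex.log_im]
      ring
    rw [him]
    apply Real.cos_nonneg_of_mem_Icc
    constructor
    · linarith [Complex.neg_pi_lt_arg z]
    · linarith [Complex.arg_le_pi z]
  have hzabs : l ^ 2 / 2 ≤ ‖z‖ := le_trans hzre (Complex.re_le_norm z)
  have hre : |l| / 2 ≤ (γ l).re := by
    have h1 : (γ l * γ l).re = (γ l).re ^ 2 - (γ l).im ^ 2 := by
      simp [Complex.mul_re]; ring
    have h2 : ‖γ l‖ ^ 2 = (γ l).re ^ 2 + (γ l).im ^ 2 := by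
      rw [Complex.sq_norm, Complex.normSq_apply]; ring
    have h3 : l ^ 2 ≤ 2 * (γ l).re ^ 2 := by
      rw [hsq] at h1
      nlinarith
    nlinarith [sq_abs l]
  have habsγ : |l| / 2 ≤ ‖γ l‖ :=
    le_trans hre (Complex.re_le_norm _)
  have hden : |l| / 2 ≤ ‖γ l - Complex.I * α‖ := by
    have h1 : (γ l - Complex.I * α).re = (γ l).re + α.im := by
      simp only [Complex.sub_re, Complex.mul_re, Complex.I_re, Complex.I_im]
      ring
    calc |l| / 2 ≤ (γ l).re := hre
      _ ≤ (γ l - Complex.I * α).re := by rw [h1]; linarith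
      _ ≤ ‖_‖ := Complex.re_le_norm _
  have e1 : (-γ l * ((y : ℂ) + (y₀ : ℂ))).re = -(γ l).re * (y + y₀) := by
    simp only [Complex.neg_re, Complex.mul_re, Complex.neg_im, Complex.add_re,
      Complex.add_im, Complex.ofReal_re, Complex.ofReal_im]
    ring
  have e2 : (-(γ l - Complex.I * α) * (C : ℂ)).re = -((γ l).re + α.im) * C := by
    simp only [Complex.neg_re, Complex.mul_re, Complex.neg_im, Complex.sub_re,
      Complex.sub_im, Complex.mul_im, Complex.I_re, Complex.I_im,
      Complex.ofReal_re, Complex.ofReal_im]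
    ring
  have e3 : (Complex.I * (l : ℂ) * ((x : ℂ) - (x₀ : ℂ))).re = 0 := by
    simp [Complex.mul_re, Complex.mul_im]
  have hφabs : ‖φ l‖ =
      ‖α‖ / (2 * Real.pi) * Real.exp (-(γ l).re * (y + y₀)) *
      (Real.exp (-((γ l).re + α.im) * C) / ‖γ l - Complex.I * α‖) *
      1 / ‖γ l‖ := by
    rw [hφ l]
    simp only [norm_div, norm_mul, Complex.norm_exp, e1, e2, e3]
    simp [Complex.norm_I, Complex.norm_real, abs_of_pos hπ]
  rw [hφabs]
  have hexp1 : Real.exp (-(γ l).re * (y + y₀)) ≤ 1 := by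
    rw [Real.exp_le_one_iff]
    nlinarith
  have hexp2 : Real.exp (-((γ l).re + α.im) * C) ≤ Real.exp (-C * |l| / 2) := by
    apply Real.exp_le_exp.mpr
    nlinarith
  have := sommerfeld_aux (‖α‖) ((γ l).re) (‖γ l - Complex.I * α‖)
    (‖γ l‖) (|l|) (Real.exp (-(γ l).re * (y + y₀)))
    (Real.exp (-((γ l).re + α.im) * C)) (y + y₀) C Real.pi
    (norm_nonneg _) hπ hlabs hre hden habsγ hexp1 (Real.exp_pos _).le
    (Real.exp_pos _).le hexp2
  calc ‖α‖ / (2 * Real.pi) * Real.exp (-(γ l).re * (y + y₀)) *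
      (Real.exp (-((γ l).re + α.im) * C) / ‖γ l - Complex.I * α‖) *
      1 / ‖γ l‖
      ≤ 2 * ‖α‖ / (Real.pi * |l| ^ 2) * Real.exp (-C * |l| / 2) := this
    _ = 2 * ‖α‖ / (Real.pi * l ^ 2) * Real.exp (-C * |l| / 2) := by
        rw [sq_abs]
end

section
/- Let k ∈ ℂ with Re k > 0 and Im k > 0, let α ∈ ℂ with Im α ≥ 0, let C > 0, and fix x₀ ∈ ℝ and y₀ ≥ 0. Define U(x, y) = (iα/2π)·∫_ℝ e^{−γ(λ)(y+y₀)}·(e^{−(γ(λ)−iα)C}/(γ(λ)−iα))·e^{iλ(x−x₀)}/γ(λ) dλ. Then at every point (x, y) ∈ ℝ² with y + y₀ + C > 0 — in particular at every point with y ≥ 0, even when y = y₀ = 0 — the integral converges absolutely, U possesses second partial derivatives in x and in y, and ∂²U/∂x² + ∂²U/∂y² + k²·U = 0. -/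
open MeasureTheory Filter Asymptotics

lemma som_aux_integrable (n : ℕ) (b : ℝ) (hb : 0 < b) :
    Integrable (fun l : ℝ => (1 + l ^ 2) ^ n * Real.exp (-b * |l|)) := by
  set f : ℝ → ℝ := fun l => (1 + l ^ 2) ^ n * Real.exp (-b * |l|) with hf
  have hcont : Continuous f := by
    apply Continuous.mul
    · exact (continuous_const.add (continuous_pow 2)).pow n
    · exact Real.continuous_exp.comp (continuous_const.mul continuous_abs)
  have heven : ∀ l, f (-l) = f l := by
    intro l; simp [hf, neg_pow, abs_neg]
  have hT : Tendsto (fun x : ℝ => (1 + x ^ 2) ^ n * Real.exp (-(b / 2) * x)) atTop (nhds 0) := by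
    have h2n : Tendsto (fun x : ℝ => x ^ (2 * n) / Real.exp ((b / 2) * x)) atTop (nhds 0) :=
      (isLittleO_pow_exp_pos_mul_atTop (2 * n) (half_pos hb)).tendsto_div_nhds_zero
    have hg : Tendsto (fun x : ℝ => (2:ℝ) ^ n * (x ^ (2 * n) / Real.exp ((b / 2) * x)))
        atTop (nhds 0) := by simpa using h2n.const_mul ((2:ℝ) ^ n)
    apply squeeze_zero' (Filter.Eventually.of_forall fun x => by positivity) ?_ hg
    filter_upwards [Filter.eventually_ge_atTop (1 : ℝ)] with x hx
    have hx2 : x ^ (2 * n) = (x ^ 2) ^ n := pow_mul x 2 n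
    have h1 : (1 + x ^ 2) ^ n ≤ (2 : ℝ) ^ n * (x ^ 2) ^ n := by
      rw [← mul_pow]
      exact pow_le_pow_left₀ (by positivity) (by nlinarith) n
    rw [hx2, ← mul_div_assoc, le_div_iff₀ (Real.exp_pos _), mul_assoc, ← Real.exp_add,
      show -(b / 2) * x + b / 2 * x = 0 by ring, Real.exp_zero, mul_one]
    exact h1
  have hO : f =O[atTop] fun x => Real.exp (-(b / 2) * x) := by
    have h1 : (fun x : ℝ => (1 + x ^ 2) ^ n * Real.exp (-(b / 2) * x)) =O[atTop]
        (fun _ : ℝ => (1 : ℝ)) := hT.isBigO_one ℝ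
    have h2 := h1.mul (isBigO_refl (fun x : ℝ => Real.exp (-(b / 2) * x)) atTop)
    apply IsBigO.congr' (h2.congr' (Filter.EventuallyEq.refl _ _) ?_) ?_ (Filter.EventuallyEq.refl _ _)
    · exact Filter.Eventually.of_forall fun x => by simp
    · filter_upwards [Filter.eventually_ge_atTop (0 : ℝ)] with x hx
      simp only [hf, abs_of_nonneg hx]
      rw [mul_assoc, ← Real.exp_add]
      congr 1
      ring
  have h1 : IntegrableOn f (Set.Ioi 0) :=
    integrable_of_isBigO_exp_neg (half_pos hb) hcont.continuousOn hO
  have hind : Integrable (Set.indicator (Set.Ioi (0:ℝ)) f) :=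
    (integrable_indicator_iff measurableSet_Ioi).2 h1
  have h2 : IntegrableOn f (Set.Iio 0) := by
    have h3 := hind.comp_neg
    have heq : (fun x : ℝ => Set.indicator (Set.Ioi (0:ℝ)) f (-x))
        = Set.indicator (Set.Iio 0) f := by
      funext x
      by_cases hx : x < 0
      · rw [Set.indicator_of_mem (Set.mem_Ioi.mpr (by linarith : (0:ℝ) < -x)),
          Set.indicator_of_mem (Set.mem_Iio.mpr hx), heven]
      · rw [Set.indicator_of_notMem (by simp [Set.mem_Ioi]; linarith),
          Set.indicator_of_notMem (by simpa [Set.mem_Iio] using hx)]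
    rw [heq] at h3
    exact (integrable_indicator_iff measurableSet_Iio).1 h3
  have h4 : IntegrableOn f (Set.Iio 0 ∪ Set.Ioi 0) := h2.union h1
  have h5 : IntegrableOn f {(0:ℝ)} := by
    rw [integrableOn_singleton_iff]
    right; simp
  rw [← integrableOn_univ]
  have huniv : (Set.univ : Set ℝ) = {(0:ℝ)} ∪ (Set.Iio 0 ∪ Set.Ioi 0) := by
    rw [Set.Iio_union_Ioi]; simp
  rw [huniv]
  exact h5.union h4

lemma som_z_im (k : ℂ) (l : ℝ) : ((l:ℂ)^2 - k^2).im = -(2 * k.re * k.im) := by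
  simp [pow_two, Complex.sub_im, Complex.mul_im]
  ring

lemma som_z_ne (k : ℂ) (hk_re : 0 < k.re) (hk_im : 0 < k.im) (l : ℝ) :
    ((l:ℂ)^2 - k^2) ≠ 0 := by
  intro h
  have := som_z_im k l
  rw [h] at this
  simp at this
  rcases this with h1 | h1 <;> linarith

lemma som_gamma_sq (k : ℂ) (hk_re : 0 < k.re) (hk_im : 0 < k.im) (l : ℝ) :
    (((l:ℂ)^2 - k^2) ^ ((1:ℂ)/2)) ^ 2 = (l:ℂ)^2 - k^2 := by
  rw [sq, ← Complex.cpow_add _ _ (som_z_ne k hk_re hk_im l)]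
  norm_num

lemma som_gamma_re_pos (k : ℂ) (hk_re : 0 < k.re) (hk_im : 0 < k.im) (l : ℝ) :
    0 < ((((l:ℂ)^2 - k^2) ^ ((1:ℂ)/2))).re := by
  set z := (l:ℂ)^2 - k^2 with hz
  have hzne : z ≠ 0 := som_z_ne k hk_re hk_im l
  have him : z.im < 0 := by
    rw [som_z_im k l]; nlinarith
  rw [Complex.cpow_def_of_ne_zero hzne]
  rw [Complex.exp_re]
  apply mul_pos (Real.exp_pos _)
  have harg : (Complex.log z * ((1:ℂ)/2)).im = z.arg / 2 := by
    have : ((1:ℂ)/2) = ((1/2 : ℝ) : ℂ) := by norm_num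
    rw [this, Complex.mul_im]
    simp [Complex.log_im]
    ring
  rw [harg]
  apply Real.cos_pos_of_mem_Ioo
  constructor
  · have := Complex.neg_pi_lt_arg z
    linarith
  · have : z.arg < 0 := Complex.arg_neg_iff.mpr him
    have := Real.pi_pos
    linarith

lemma som_prod (k : ℂ) (hk_re : 0 < k.re) (hk_im : 0 < k.im) (l : ℝ) :
    ((((l:ℂ)^2 - k^2) ^ ((1:ℂ)/2))).re * ((((l:ℂ)^2 - k^2) ^ ((1:ℂ)/2))).im
      = -(k.re * k.im) := by
  have h := congrArg Complex.im (som_gamma_sq k hk_re hk_im l)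
  rw [sq, Complex.mul_im, som_z_im] at h
  linarith

lemma som_resq (k : ℂ) (hk_re : 0 < k.re) (hk_im : 0 < k.im) (l : ℝ) :
    ((((l:ℂ)^2 - k^2) ^ ((1:ℂ)/2))).re ^ 2 - ((((l:ℂ)^2 - k^2) ^ ((1:ℂ)/2))).im ^ 2
      = l ^ 2 - (k^2).re := by
  have h := congrArg Complex.re (som_gamma_sq k hk_re hk_im l)
  rw [sq, Complex.mul_re] at h
  have h2 : ((l:ℂ)^2 - k^2).re = l^2 - (k^2).re := by
    simp [pow_two, Complex.sub_re, Complex.mul_re]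
  rw [h2] at h
  nlinarith [h]

lemma som_m_le (k : ℂ) (hk_re : 0 < k.re) (hk_im : 0 < k.im) (l : ℝ) :
    Real.sqrt ((k.re * k.im)^2 / (k.re * k.im + max ((k^2).re) 0))
      ≤ ((((l:ℂ)^2 - k^2) ^ ((1:ℂ)/2))).re := by
  set h := ((((l:ℂ)^2 - k^2) ^ ((1:ℂ)/2))).re
  set i := ((((l:ℂ)^2 - k^2) ^ ((1:ℂ)/2))).im
  set c₀ := k.re * k.im with hc₀def
  set K := max ((k^2).re) 0 with hKdef
  have hc₀ : 0 < c₀ := mul_pos hk_re hk_im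
  have hK0 : 0 ≤ K := le_max_right _ _
  have hK1 : (k^2).re ≤ K := le_max_left _ _
  have hh : 0 < h := som_gamma_re_pos k hk_re hk_im l
  have e1 : h * i = -c₀ := som_prod k hk_re hk_im l
  have e2 : h^2 - i^2 = l^2 - (k^2).re := som_resq k hk_re hk_im l
  set m := Real.sqrt (c₀^2 / (c₀ + K)) with hmdef
  have hm0 : 0 ≤ m := Real.sqrt_nonneg _
  have hm2 : m^2 = c₀^2 / (c₀ + K) := Real.sq_sqrt (by positivity)
  have hm2' : m^2 * (c₀ + K) = c₀^2 := by
    rw [hm2]; field_simp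
  by_contra hcon
  push_neg at hcon
  have hh2 : h^2 < m^2 := by nlinarith
  have hsq : (h * i)^2 = c₀^2 := by rw [e1]; ring
  have h4 : h^4 = c₀^2 + (l^2 - (k^2).re) * h^2 := by
    linear_combination h^2 * e2 + hsq
  have hm2c : m^2 ≤ c₀ := by nlinarith
  have hnn : 0 ≤ (l^2 - (k^2).re + K) * h^2 := mul_nonneg (by nlinarith) (sq_nonneg h)
  nlinarith [h4, hnn, hh2, hm2c, hm2', sq_nonneg h, sq_nonneg m]

lemma som_absl_le (k : ℂ) (hk_re : 0 < k.re) (hk_im : 0 < k.im) (l : ℝ) :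
    |l| - Real.sqrt (max ((k^2).re) 0) ≤ ((((l:ℂ)^2 - k^2) ^ ((1:ℂ)/2))).re := by
  set h := ((((l:ℂ)^2 - k^2) ^ ((1:ℂ)/2))).re
  set R := Real.sqrt (max ((k^2).re) 0) with hRdef
  have hR0 : 0 ≤ R := Real.sqrt_nonneg _
  have hR2 : R^2 = max ((k^2).re) 0 := Real.sq_sqrt (le_max_right _ _)
  have hh : 0 < h := som_gamma_re_pos k hk_re hk_im l
  rcases le_or_gt (|l|) R with hcase | hcase
  · linarith
  · have e2 : h^2 - ((((l:ℂ)^2 - k^2) ^ ((1:ℂ)/2))).im^2 = l^2 - (k^2).re :=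
      som_resq k hk_re hk_im l
    have hK1 : (k^2).re ≤ R^2 := by rw [hR2]; exact le_max_left _ _
    have h1 : (|l| - R)^2 ≤ h^2 := by
      have hl2 : |l|^2 = l^2 := sq_abs l
      nlinarith [sq_nonneg ((((l:ℂ)^2 - k^2) ^ ((1:ℂ)/2))).im]
    nlinarith [h1, hh.le, hcase, hR0]

lemma som_gamma_norm_le (k : ℂ) (hk_re : 0 < k.re) (hk_im : 0 < k.im) (l : ℝ) :
    ‖(((l:ℂ)^2 - k^2) ^ ((1:ℂ)/2))‖ ≤ (1 + ‖k‖) * (1 + l^2) := by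
  have h1 : ‖(((l:ℂ)^2 - k^2) ^ ((1:ℂ)/2))‖^2 = ‖(l:ℂ)^2 - k^2‖ := by
    rw [← norm_pow, som_gamma_sq k hk_re hk_im l]
  have h2 : ‖(l:ℂ)^2 - k^2‖ ≤ l^2 + ‖k‖^2 := by
    calc ‖(l:ℂ)^2 - k^2‖ ≤ ‖(l:ℂ)^2‖ + ‖k^2‖ := norm_sub_le _ _
    _ = l^2 + ‖k‖^2 := by
        rw [norm_pow, norm_pow, Complex.norm_real, Real.norm_eq_abs, sq_abs]
  have h3 : 0 ≤ ‖(((l:ℂ)^2 - k^2) ^ ((1:ℂ)/2))‖ := norm_nonneg _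
  have key : l^2 + ‖k‖^2 ≤ ((1 + ‖k‖) * (1 + l^2))^2 := by
    nlinarith [norm_nonneg k, sq_nonneg l, sq_nonneg ‖k‖, sq_nonneg (l * ‖k‖), sq_nonneg (l^2)]
  have hs : (0:ℝ) ≤ (1 + ‖k‖) * (1 + l^2) := by positivity
  calc ‖(((l:ℂ)^2 - k^2) ^ ((1:ℂ)/2))‖
      = Real.sqrt (‖(((l:ℂ)^2 - k^2) ^ ((1:ℂ)/2))‖^2) := (Real.sqrt_sq h3).symm
    _ ≤ Real.sqrt (((1 + ‖k‖) * (1 + l^2))^2) := Real.sqrt_le_sqrt (by nlinarith [key, h1, h2])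
    _ = (1 + ‖k‖) * (1 + l^2) := Real.sqrt_sq hs

noncomputable def somE (γ : ℝ → ℂ) (α : ℂ) (C x₀ y₀ x y : ℝ) (l : ℝ) : ℂ :=
  Complex.exp (-γ l * (y + y₀)) *
    (Complex.exp (-(γ l - Complex.I * α) * C) / (γ l - Complex.I * α)) *
    Complex.exp (Complex.I * l * (x - x₀)) / γ l

set_option maxHeartbeats 2000000 in
/-- The Sommerfeld-like tail
`U(x,y) = (iα/2π)·∫_ℝ e^{−γ(λ)(y+y₀)}·(e^{−(γ(λ)−iα)C}/(γ(λ)−iα))·e^{iλ(x−x₀)}/γ(λ) dλ`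
of the hybrid representation: at every point with `y + y₀ + C > 0` (in
particular for all `y ≥ 0`, even when `y = y₀ = 0`) the integral converges
absolutely, `U` possesses second partial derivatives in `x` and `y`, and
`∂²U/∂x² + ∂²U/∂y² + k²·U = 0`. -/
theorem sommerfeld_tail_satisfies_helmholtz (k α : ℂ)
    (hk_re : 0 < k.re) (hk_im : 0 < k.im) (hα : 0 ≤ α.im)
    (C : ℝ) (hC : 0 < C)
    (x₀ y₀ : ℝ) (hy₀ : 0 ≤ y₀)
    (γ : ℝ → ℂ) (hγ : ∀ l : ℝ, γ l = ((l : ℂ) ^ 2 - k ^ 2) ^ ((1 : ℂ) / 2))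
    (U : ℝ → ℝ → ℂ)
    (hU : ∀ x y : ℝ, U x y = (Complex.I * α / (2 * (Real.pi : ℂ))) *
      ∫ l : ℝ, Complex.exp (-γ l * (y + y₀)) *
        (Complex.exp (-(γ l - Complex.I * α) * C) / (γ l - Complex.I * α)) *
        Complex.exp (Complex.I * l * (x - x₀)) / γ l)
    (x y : ℝ) (hy : 0 < y + y₀ + C) :
    Integrable (fun l : ℝ =>
      Complex.exp (-γ l * (y + y₀)) *
        (Complex.exp (-(γ l - Complex.I * α) * C) / (γ l - Complex.I * α)) *
        Complex.exp (Complex.I * l * (x - x₀)) / γ l) ∧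
    ∃ Ux Uxx Uy Uyy : ℂ,
      HasDerivAt (fun t : ℝ => U t y) Ux x ∧
      HasDerivAt (fun t : ℝ => deriv (fun s : ℝ => U s y) t) Uxx x ∧
      HasDerivAt (fun t : ℝ => U x t) Uy y ∧
      HasDerivAt (fun t : ℝ => deriv (fun s : ℝ => U x s) t) Uyy y ∧
      Uxx + Uyy + k ^ 2 * U x y = 0 := by
  -- abbreviations
  set Kc : ℂ := Complex.I * α / (2 * (Real.pi : ℂ)) with hKc
  set m : ℝ := Real.sqrt ((k.re * k.im)^2 / (k.re * k.im + max ((k^2).re) 0)) with hmdef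
  set R : ℝ := Real.sqrt (max ((k^2).re) 0) with hRdef
  have hm_pos : 0 < m := Real.sqrt_pos.mpr (by
    have h1 : 0 < k.re * k.im := mul_pos hk_re hk_im
    have h2 : (0:ℝ) ≤ max ((k^2).re) 0 := le_max_right _ _
    positivity)
  have hR0 : 0 ≤ R := Real.sqrt_nonneg _
  -- facts about γ
  have hpos : ∀ l, 0 < (γ l).re := fun l => by
    rw [hγ l]; exact som_gamma_re_pos k hk_re hk_im l
  have hγne : ∀ l, γ l ≠ 0 := fun l h => by
    have := hpos l; rw [h] at this; simp at this
  have hγsq : ∀ l, γ l ^ 2 = (l:ℂ)^2 - k^2 := fun l => by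
    rw [hγ l]; exact som_gamma_sq k hk_re hk_im l
  have hm_le : ∀ l, m ≤ (γ l).re := fun l => by
    rw [hγ l]; exact som_m_le k hk_re hk_im l
  have habs_le : ∀ l, |l| - R ≤ (γ l).re := fun l => by
    rw [hγ l]; exact som_absl_le k hk_re hk_im l
  have hγ_norm : ∀ l, ‖γ l‖ ≤ (1 + ‖k‖) * (1 + l^2) := fun l => by
    rw [hγ l]; exact som_gamma_norm_le k hk_re hk_im l
  have hγc : Continuous γ := by
    have hfe : γ = fun l : ℝ => ((l:ℂ)^2 - k^2) ^ ((1:ℂ)/2) := funext hγ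
    rw [hfe]
    apply continuous_iff_continuousAt.mpr
    intro l
    have hbase : Continuous (fun l : ℝ => ((l:ℂ)^2 - k^2)) :=
      (Complex.continuous_ofReal.pow 2).sub continuous_const
    have h2 : ContinuousAt (fun z : ℂ => z ^ ((1:ℂ)/2)) ((l:ℂ)^2 - k^2) := by
      apply continuousAt_cpow_const
      rw [Complex.mem_slitPlane_iff]
      right
      rw [som_z_im k l]
      have hkk := mul_pos hk_re hk_im
      intro h; nlinarith
    exact ContinuousAt.comp (f := fun l : ℝ => ((l:ℂ)^2 - k^2)) h2 hbase.continuousAt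
  -- g = γ - Iα facts
  have hgre : ∀ l, (γ l - Complex.I * α).re = (γ l).re + α.im := by
    intro l; simp [Complex.sub_re, Complex.mul_re]
  have hgne : ∀ l, γ l - Complex.I * α ≠ 0 := fun l h => by
    have h1 := hgre l
    rw [h] at h1
    simp at h1
    have := hpos l
    linarith
  -- continuity of the integrand
  have hEcont : ∀ x' y', Continuous (fun l => somE γ α C x₀ y₀ x' y' l) := by
    intro x' y'
    unfold somE
    apply Continuous.div ?_ hγc hγne
    apply Continuous.mul
    · apply Continuous.mul
      · exact Complex.continuous_exp.comp ((hγc.neg).mul continuous_const)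
      · apply Continuous.div ?_ (hγc.sub continuous_const) hgne
        exact Complex.continuous_exp.comp (((hγc.sub continuous_const).neg).mul continuous_const)
    · apply Complex.continuous_exp.comp
      exact (continuous_const.mul Complex.continuous_ofReal).mul continuous_const
  -- the basic norm bound
  have hEnorm : ∀ (x' y' : ℝ) (l : ℝ),
      ‖somE γ α C x₀ y₀ x' y' l‖ ≤
        Real.exp (-(y' + y₀ + C) * (γ l).re) / (γ l).re ^ 2 := by
    intro x' y' l
    have hh := hpos l
    unfold somE
    rw [norm_div, norm_mul, norm_mul, norm_div]
    have he1 : ‖Complex.exp (-γ l * (y' + y₀))‖ = Real.exp (-(γ l).re * (y' + y₀)) := by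
      rw [Complex.norm_exp]
      congr 1
      simp [Complex.mul_re]
    have he3 : ‖Complex.exp (Complex.I * l * (x' - x₀))‖ = 1 := by
      rw [Complex.norm_exp]
      have : (Complex.I * l * ((x':ℂ) - x₀)).re = 0 := by
        simp [Complex.mul_re, Complex.mul_im]
      rw [this, Real.exp_zero]
    have he2 : ‖Complex.exp (-(γ l - Complex.I * α) * C)‖ ≤ Real.exp (-(γ l).re * C) := by
      rw [Complex.norm_exp, Real.exp_le_exp]
      have h5 : (-(γ l - Complex.I * α) * (C:ℂ)).re = -((γ l).re + α.im) * C := by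
        rw [Complex.mul_re, Complex.ofReal_re, Complex.ofReal_im, mul_zero, sub_zero,
          Complex.neg_re, hgre l]
      rw [h5]
      nlinarith
    have hgnorm : (γ l).re ≤ ‖γ l - Complex.I * α‖ := by
      calc (γ l).re ≤ (γ l - Complex.I * α).re := by rw [hgre l]; linarith
      _ ≤ ‖γ l - Complex.I * α‖ := Complex.re_le_norm _
    have hγnorm : (γ l).re ≤ ‖γ l‖ := by
      exact Complex.re_le_norm _
    rw [he1, he3]
    calc Real.exp (-(γ l).re * (y' + y₀)) *
          (‖Complex.exp (-(γ l - Complex.I * α) * C)‖ / ‖γ l - Complex.I * α‖) * 1 / ‖γ l‖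
        ≤ Real.exp (-(γ l).re * (y' + y₀)) *
          (Real.exp (-(γ l).re * C) / (γ l).re) * 1 / (γ l).re := by
          apply div_le_div₀ (by positivity) ?_ hh hγnorm
          rw [mul_one, mul_one]
          apply mul_le_mul_of_nonneg_left ?_ (Real.exp_pos _).le
          apply div_le_div₀ (Real.exp_pos _).le he2 hh hgnorm
      _ = Real.exp (-(y' + y₀ + C) * (γ l).re) / (γ l).re ^ 2 := by
          rw [show -(y' + y₀ + C) * (γ l).re
              = (-(γ l).re * (y' + y₀)) + (-(γ l).re * C) by ring, Real.exp_add]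
          ring
  -- uniform exponential bound
  have hEb : ∀ (s₀ : ℝ), 0 < s₀ → ∀ (x' y' : ℝ), s₀ ≤ y' + y₀ + C → ∀ l : ℝ,
      ‖somE γ α C x₀ y₀ x' y' l‖ ≤ Real.exp (s₀ * R) / m ^ 2 * Real.exp (-s₀ * |l|) := by
    intro s₀ hs₀ x' y' hs l
    have hh := hpos l
    have hm := hm_le l
    have ha := habs_le l
    refine (hEnorm x' y' l).trans ?_
    have step1 : Real.exp (-(y' + y₀ + C) * (γ l).re) ≤ Real.exp (s₀ * R) * Real.exp (-s₀ * |l|) := by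
      rw [← Real.exp_add, Real.exp_le_exp]
      have h1 : -(y' + y₀ + C) * (γ l).re ≤ -s₀ * (γ l).re := by nlinarith
      have h2 : -s₀ * (γ l).re ≤ -s₀ * (|l| - R) := by nlinarith
      nlinarith
    have step2 : m ^ 2 ≤ (γ l).re ^ 2 := by nlinarith
    calc Real.exp (-(y' + y₀ + C) * (γ l).re) / (γ l).re ^ 2
        ≤ (Real.exp (s₀ * R) * Real.exp (-s₀ * |l|)) / m ^ 2 :=
          div_le_div₀ (by positivity) step1 (by positivity) step2
      _ = Real.exp (s₀ * R) / m ^ 2 * Real.exp (-s₀ * |l|) := by ring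
  -- master integrability
  have hIntGen : ∀ (p : ℝ → ℂ) (c : ℝ), Continuous p → (∀ l, ‖p l‖ ≤ c * (1 + l^2)) →
      ∀ (x' y' : ℝ), 0 < y' + y₀ + C →
      Integrable (fun l => p l * somE γ α C x₀ y₀ x' y' l) := by
    intro p c hpc hpb x' y' hy'
    have hc : 0 ≤ c := by have := hpb 0; have := norm_nonneg (p 0); nlinarith
    set s₀ := y' + y₀ + C with hs₀def
    apply Integrable.mono'
      (g := fun l => (c * (Real.exp (s₀ * R) / m ^ 2)) * ((1 + l^2)^1 * Real.exp (-s₀ * |l|)))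
    · exact (som_aux_integrable 1 s₀ hy').const_mul _
    · exact (hpc.mul (hEcont x' y')).aestronglyMeasurable
    · apply Filter.Eventually.of_forall
      intro l
      rw [norm_mul]
      calc ‖p l‖ * ‖somE γ α C x₀ y₀ x' y' l‖
          ≤ (c * (1 + l^2)) * (Real.exp (s₀ * R) / m ^ 2 * Real.exp (-s₀ * |l|)) := by
            apply mul_le_mul (hpb l) (hEb s₀ hy' x' y' le_rfl l) (norm_nonneg _) (by positivity)
        _ = (c * (Real.exp (s₀ * R) / m ^ 2)) * ((1 + l^2)^1 * Real.exp (-s₀ * |l|)) := by ring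
  -- derivative of the exponential factors
  have hDerivExpX : ∀ (l t : ℝ),
      HasDerivAt (fun t : ℝ => Complex.exp (Complex.I * l * ((t:ℂ) - x₀)))
        (Complex.I * l * Complex.exp (Complex.I * l * ((t:ℂ) - x₀))) t := by
    intro l t
    have h0 : HasDerivAt (fun t : ℝ => ((t:ℂ) - x₀)) 1 t := by
      simpa using (Complex.ofRealCLM.hasDerivAt (x := t)).sub_const (x₀ : ℂ)
    have h1 := (h0.const_mul (Complex.I * l)).cexp
    simpa [mul_comm] using h1
  have hDerivExpY : ∀ (l t : ℝ),
      HasDerivAt (fun t : ℝ => Complex.exp (-γ l * ((t:ℂ) + y₀)))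
        (-γ l * Complex.exp (-γ l * ((t:ℂ) + y₀))) t := by
    intro l t
    have h0 : HasDerivAt (fun t : ℝ => ((t:ℂ) + y₀)) 1 t := by
      simpa using (Complex.ofRealCLM.hasDerivAt (x := t)).add_const (y₀ : ℂ)
    have h1 := (h0.const_mul (-γ l)).cexp
    simpa [mul_comm] using h1
  -- pointwise derivative in x
  have hPtX : ∀ (p : ℝ → ℂ) (l t : ℝ),
      HasDerivAt (fun t : ℝ => p l * somE γ α C x₀ y₀ t y l)
        (Complex.I * l * p l * somE γ α C x₀ y₀ t y l) t := by
    intro p l t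
    have h1 := (((hDerivExpX l t).const_mul
        (Complex.exp (-γ l * ((y:ℂ) + y₀)) *
          (Complex.exp (-(γ l - Complex.I * α) * C) / (γ l - Complex.I * α)))).div_const
        (γ l)).const_mul (p l)
    exact h1.congr_deriv (by unfold somE; ring)
  have hPtY : ∀ (p : ℝ → ℂ) (x' : ℝ) (l t : ℝ),
      HasDerivAt (fun t : ℝ => p l * somE γ α C x₀ y₀ x' t l)
        (-γ l * p l * somE γ α C x₀ y₀ x' t l) t := by
    intro p x' l t
    have hfun : (fun t : ℝ => p l * somE γ α C x₀ y₀ x' t l)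
        = fun t : ℝ => p l * (Complex.exp (-γ l * ((t:ℂ) + y₀)) *
            ((Complex.exp (-(γ l - Complex.I * α) * C) / (γ l - Complex.I * α)) *
              Complex.exp (Complex.I * l * ((x':ℂ) - x₀)) / γ l)) := by
      funext t; unfold somE; ring
    rw [hfun]
    have h1 := ((hDerivExpY l t).mul_const
        ((Complex.exp (-(γ l - Complex.I * α) * C) / (γ l - Complex.I * α)) *
          Complex.exp (Complex.I * l * ((x':ℂ) - x₀)) / γ l)).const_mul (p l)
    exact h1.congr_deriv (by unfold somE; ring)
  -- x-direction derivative under the integral (at the fixed y)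
  have derivX : ∀ (p : ℝ → ℂ) (c : ℝ), Continuous p → (∀ l, ‖p l‖ ≤ c * (1 + l^2)) →
      ∀ x' : ℝ, HasDerivAt (fun t => ∫ l : ℝ, p l * somE γ α C x₀ y₀ t y l)
        (∫ l : ℝ, Complex.I * l * p l * somE γ α C x₀ y₀ x' y l) x' := by
    intro p c hpc hpb x'
    have hc : 0 ≤ c := by have := hpb 0; have := norm_nonneg (p 0); nlinarith
    have key := hasDerivAt_integral_of_dominated_loc_of_deriv_le (𝕜 := ℝ) (μ := volume)
      (F := fun t l => p l * somE γ α C x₀ y₀ t y l)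
      (F' := fun t l => Complex.I * l * p l * somE γ α C x₀ y₀ t y l)
      (x₀ := x')
      (bound := fun l => ((c + 1) * (Real.exp ((y + y₀ + C) * R) / m ^ 2)) *
        ((1 + l^2)^2 * Real.exp (-(y + y₀ + C) * |l|)))
      (Metric.ball_mem_nhds x' one_pos)
      (Filter.Eventually.of_forall fun t =>
        ((hpc.mul (hEcont t y)).aestronglyMeasurable))
      (hIntGen p c hpc hpb x' y hy)
      (((continuous_const.mul Complex.continuous_ofReal).mul hpc).mul
        (hEcont x' y)).aestronglyMeasurable
      ?_ ?_ ?_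
    · exact key.2
    · apply Filter.Eventually.of_forall
      intro l t _
      rw [norm_mul, norm_mul]
      have h1 : ‖Complex.I * (l:ℂ)‖ ≤ 1 + l^2 := by
        rw [norm_mul, Complex.norm_I, one_mul, Complex.norm_real, Real.norm_eq_abs]
        nlinarith [abs_nonneg l, sq_abs l, sq_nonneg (|l| - 1)]
      calc ‖Complex.I * (l:ℂ)‖ * ‖p l‖ * ‖somE γ α C x₀ y₀ t y l‖
          ≤ ((1 + l^2)) * ((c+1) * (1 + l^2)) *
              (Real.exp ((y + y₀ + C) * R) / m ^ 2 * Real.exp (-(y + y₀ + C) * |l|)) := by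
            apply mul_le_mul ?_ (hEb (y + y₀ + C) hy t y le_rfl l) (norm_nonneg _) (by positivity)
            apply mul_le_mul h1 ((hpb l).trans ?_) (norm_nonneg _) (by positivity)
            nlinarith [sq_nonneg l]
        _ = ((c + 1) * (Real.exp ((y + y₀ + C) * R) / m ^ 2)) *
              ((1 + l^2)^2 * Real.exp (-(y + y₀ + C) * |l|)) := by ring
    · exact ((som_aux_integrable 2 (y + y₀ + C) hy).const_mul _)
    · exact Filter.Eventually.of_forall fun l => fun t _ => hPtX p l t
  -- y-direction derivative under the integral (at the fixed x)
  have derivY : ∀ (p : ℝ → ℂ) (c : ℝ), Continuous p → (∀ l, ‖p l‖ ≤ c * (1 + l^2)) →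
      ∀ y' : ℝ, 0 < y' + y₀ + C →
      HasDerivAt (fun t => ∫ l : ℝ, p l * somE γ α C x₀ y₀ x t l)
        (∫ l : ℝ, -γ l * p l * somE γ α C x₀ y₀ x y' l) y' := by
    intro p c hpc hpb y' hy'
    have hc : 0 ≤ c := by have := hpb 0; have := norm_nonneg (p 0); nlinarith
    set s₀ := (y' + y₀ + C) / 2 with hs₀def
    have hs₀ : 0 < s₀ := by positivity
    have key := hasDerivAt_integral_of_dominated_loc_of_deriv_le (𝕜 := ℝ) (μ := volume)
      (F := fun t l => p l * somE γ α C x₀ y₀ x t l)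
      (F' := fun t l => -γ l * p l * somE γ α C x₀ y₀ x t l)
      (x₀ := y')
      (bound := fun l => ((c + 1) * (1 + ‖k‖) * (Real.exp (s₀ * R) / m ^ 2)) *
        ((1 + l^2)^2 * Real.exp (-s₀ * |l|)))
      (Metric.ball_mem_nhds y' hs₀)
      (Filter.Eventually.of_forall fun t =>
        ((hpc.mul (hEcont x t)).aestronglyMeasurable))
      (hIntGen p c hpc hpb x y' hy')
      (((hγc.neg.mul hpc).mul (hEcont x y')).aestronglyMeasurable)
      ?_ ?_ ?_
    · exact key.2
    · apply Filter.Eventually.of_forall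
      intro l t ht
      have hts : s₀ ≤ t + y₀ + C := by
        rw [Metric.mem_ball, Real.dist_eq, abs_lt] at ht
        simp only [hs₀def] at *
        linarith [ht.1, ht.2]
      rw [norm_mul, norm_mul]
      calc ‖-γ l‖ * ‖p l‖ * ‖somE γ α C x₀ y₀ x t l‖
          ≤ ((1 + ‖k‖) * (1 + l^2)) * ((c+1) * (1 + l^2)) *
              (Real.exp (s₀ * R) / m ^ 2 * Real.exp (-s₀ * |l|)) := by
            apply mul_le_mul ?_ (hEb s₀ hs₀ x t hts l) (norm_nonneg _) (by positivity)
            apply mul_le_mul ?_ ((hpb l).trans ?_) (norm_nonneg _) (by positivity)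
            · rw [norm_neg]; exact hγ_norm l
            · nlinarith [sq_nonneg l]
        _ = ((c + 1) * (1 + ‖k‖) * (Real.exp (s₀ * R) / m ^ 2)) *
              ((1 + l^2)^2 * Real.exp (-s₀ * |l|)) := by ring
    · exact ((som_aux_integrable 2 s₀ hs₀).const_mul _)
    · exact Filter.Eventually.of_forall fun l => fun t _ => hPtY p x l t
  -- simple p's
  have hp1 : ∀ l : ℝ, ‖(1:ℂ)‖ ≤ (1:ℝ) * (1 + l^2) := by
    intro l; simp; nlinarith [sq_nonneg l]
  have hpIl : ∀ l : ℝ, ‖Complex.I * (l:ℂ)‖ ≤ (1:ℝ) * (1 + l^2) := by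
    intro l
    rw [norm_mul, Complex.norm_I, one_mul, Complex.norm_real, Real.norm_eq_abs]
    nlinarith [abs_nonneg l, sq_abs l, sq_nonneg (|l| - 1)]
  have hpγ : ∀ l : ℝ, ‖-γ l‖ ≤ (1 + ‖k‖) * (1 + l^2) := by
    intro l; rw [norm_neg]; exact hγ_norm l
  have hcIl : Continuous (fun l : ℝ => Complex.I * (l:ℂ)) :=
    continuous_const.mul Complex.continuous_ofReal
  have hcnγ : Continuous (fun l : ℝ => -γ l) := hγc.neg
  -- Part 1 : integrability
  have hInt0 : Integrable (fun l => somE γ α C x₀ y₀ x y l) := by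
    have := hIntGen (fun _ => 1) 1 continuous_const hp1 x y hy
    simpa using this
  refine ⟨hInt0, ?_⟩
  -- U as constant times integral
  have hUeq : ∀ x' y', U x' y' = Kc * ∫ l : ℝ, somE γ α C x₀ y₀ x' y' l := fun x' y' => hU x' y'
  -- first x-derivative, at every point x'
  have hDX1 : ∀ x' : ℝ, HasDerivAt (fun t : ℝ => U t y)
      (Kc * ∫ l : ℝ, Complex.I * l * somE γ α C x₀ y₀ x' y l) x' := by
    intro x'
    have h1 := derivX (fun _ => 1) 1 continuous_const hp1 x'
    simp only [one_mul, mul_one] at h1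
    have hfun : (fun t : ℝ => U t y) = fun t => Kc * ∫ l : ℝ, somE γ α C x₀ y₀ t y l :=
      funext fun t => hUeq t y
    rw [hfun]
    exact h1.const_mul Kc
  -- second x-derivative
  have hDX2 : HasDerivAt (fun t : ℝ => deriv (fun s : ℝ => U s y) t)
      (Kc * ∫ l : ℝ, Complex.I * l * (Complex.I * l) * somE γ α C x₀ y₀ x y l) x := by
    have hfun : (fun t : ℝ => deriv (fun s : ℝ => U s y) t)
        = fun t : ℝ => Kc * ∫ l : ℝ, Complex.I * l * somE γ α C x₀ y₀ t y l :=
      funext fun t => (hDX1 t).deriv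
    rw [hfun]
    have h2 := derivX (fun l : ℝ => Complex.I * (l:ℂ)) 1 hcIl hpIl x
    exact h2.const_mul Kc
  -- first y-derivative at every y' with positivity
  have hDY1 : ∀ y' : ℝ, 0 < y' + y₀ + C → HasDerivAt (fun t : ℝ => U x t)
      (Kc * ∫ l : ℝ, -γ l * somE γ α C x₀ y₀ x y' l) y' := by
    intro y' hy'
    have h1 := derivY (fun _ => 1) 1 continuous_const hp1 y' hy'
    simp only [one_mul, mul_one] at h1
    have hfun : (fun t : ℝ => U x t) = fun t => Kc * ∫ l : ℝ, somE γ α C x₀ y₀ x t l :=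
      funext fun t => hUeq x t
    rw [hfun]
    exact h1.const_mul Kc
  -- second y-derivative
  have hDY2 : HasDerivAt (fun t : ℝ => deriv (fun s : ℝ => U x s) t)
      (Kc * ∫ l : ℝ, -γ l * -γ l * somE γ α C x₀ y₀ x y l) y := by
    have h2 := derivY (fun l : ℝ => -γ l) (1 + ‖k‖) hcnγ hpγ y hy
    have hW := h2.const_mul Kc
    apply hW.congr_of_eventuallyEq
    have hopen : IsOpen {t : ℝ | 0 < t + y₀ + C} :=
      isOpen_lt continuous_const ((continuous_id.add continuous_const).add continuous_const)
    have hmem : {t : ℝ | 0 < t + y₀ + C} ∈ nhds y := hopen.mem_nhds hy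
    apply Filter.eventuallyEq_of_mem hmem
    intro t ht
    exact (hDY1 t ht).deriv
  -- the three integrability facts needed for the PDE
  have hpII : ∀ l : ℝ, ‖Complex.I * (l:ℂ) * (Complex.I * (l:ℂ))‖ ≤ (1:ℝ) * (1 + l^2) := by
    intro l
    have e : ‖Complex.I * (l:ℂ)‖ = |l| := by
      rw [norm_mul, Complex.norm_I, one_mul, Complex.norm_real, Real.norm_eq_abs]
    rw [norm_mul, e]
    nlinarith [sq_abs l, abs_nonneg l]
  have hIntA : Integrable (fun l : ℝ =>
      Complex.I * l * (Complex.I * l) * somE γ α C x₀ y₀ x y l) := by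
    have := hIntGen (fun l : ℝ => Complex.I * (l:ℂ) * (Complex.I * (l:ℂ))) 1
      (hcIl.mul hcIl) hpII x y hy
    exact this
  have hpγγ : ∀ l : ℝ, ‖-γ l * -γ l‖ ≤ (1 + ‖k‖^2) * (1 + l^2) := by
    intro l
    have e : -γ l * -γ l = γ l ^ 2 := by ring
    rw [e, hγsq l]
    calc ‖(l:ℂ)^2 - k^2‖ ≤ ‖(l:ℂ)^2‖ + ‖k^2‖ := norm_sub_le _ _
      _ = l^2 + ‖k‖^2 := by
          rw [norm_pow, norm_pow, Complex.norm_real, Real.norm_eq_abs, sq_abs]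
      _ ≤ (1 + ‖k‖^2) * (1 + l^2) := by nlinarith [sq_nonneg l, sq_nonneg ‖k‖, sq_nonneg (l * ‖k‖)]
  have hIntB : Integrable (fun l : ℝ => -γ l * -γ l * somE γ α C x₀ y₀ x y l) := by
    have := hIntGen (fun l : ℝ => -γ l * -γ l) (1 + ‖k‖^2)
      (hcnγ.mul hcnγ) hpγγ x y hy
    exact this
  -- the sum identity
  have hsum : (∫ l : ℝ, Complex.I * l * (Complex.I * l) * somE γ α C x₀ y₀ x y l)
      + (∫ l : ℝ, -γ l * -γ l * somE γ α C x₀ y₀ x y l)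
      = -k^2 * ∫ l : ℝ, somE γ α C x₀ y₀ x y l := by
    rw [← integral_add hIntA hIntB]
    have hfe : (fun l : ℝ => Complex.I * l * (Complex.I * l) * somE γ α C x₀ y₀ x y l
        + -γ l * -γ l * somE γ α C x₀ y₀ x y l)
        = fun l : ℝ => -k^2 * somE γ α C x₀ y₀ x y l := by
      funext l
      have hsq := hγsq l
      have hI := Complex.I_sq
      linear_combination (somE γ α C x₀ y₀ x y l) * hsq
        + (somE γ α C x₀ y₀ x y l) * ((l:ℂ))^2 * hI
    rw [hfe]
    exact integral_const_mul _ _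
  refine ⟨Kc * ∫ l : ℝ, Complex.I * l * somE γ α C x₀ y₀ x y l,
    Kc * ∫ l : ℝ, Complex.I * l * (Complex.I * l) * somE γ α C x₀ y₀ x y l,
    Kc * ∫ l : ℝ, -γ l * somE γ α C x₀ y₀ x y l,
    Kc * ∫ l : ℝ, -γ l * -γ l * somE γ α C x₀ y₀ x y l,
    hDX1 x, hDX2, hDY1 y hy, hDY2, ?_⟩
  rw [hUeq x y]
  linear_combination Kc * hsum
end

section
/- Let k ∈ ℂ with Re k > 0 and Im k > 0, let α ∈ ℂ with Im α ≥ 0, and let y, y₀ ≥ 0. Then the function (λ, η) ↦ e^{−γ(λ)(y+y₀+η)}·e^{iαη}/γ(λ) is Lebesgue integrable on ℝ × (0, ∞) (with respect to the product measure). -/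
open MeasureTheory

/-- `∫ x in Ioi 0, exp (-b*x) = 1/b` for `b > 0`. -/
lemma aux_integral_exp_neg_mul_Ioi {b : ℝ} (hb : 0 < b) :
    ∫ x in Set.Ioi (0 : ℝ), Real.exp (-b * x) = 1 / b := by
  have hderiv : ∀ x ∈ Set.Ici (0 : ℝ),
      HasDerivAt (fun x : ℝ => -Real.exp (-b * x) / b) (Real.exp (-b * x)) x := by
    intro x _
    have h1 : HasDerivAt (fun x : ℝ => -b * x) (-b) x := by
      simpa using (hasDerivAt_id x).const_mul (-b)
    have h2 := (Real.hasDerivAt_exp (-b * x)).comp x h1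
    have h3 := (h2.neg).div_const b
    exact h3.congr_deriv (by field_simp [hb.ne'])
  have hint : IntegrableOn (fun x : ℝ => Real.exp (-b * x)) (Set.Ioi 0) :=
    exp_neg_integrableOn_Ioi 0 hb
  have htend : Filter.Tendsto (fun x : ℝ => -Real.exp (-b * x) / b)
      Filter.atTop (nhds 0) := by
    have h1 : Filter.Tendsto (fun x : ℝ => -b * x) Filter.atTop Filter.atBot := by
      exact Filter.Tendsto.const_mul_atTop_of_neg (by linarith) Filter.tendsto_id
    have h2 : Filter.Tendsto (fun x : ℝ => Real.exp (-b * x)) Filter.atTop (nhds 0) :=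
      Real.tendsto_exp_atBot.comp h1
    have h3 := (h2.neg).div_const b
    simpa using h3
  have h := integral_Ioi_of_hasDerivAt_of_tendsto' hderiv hint htend
  rw [h, mul_zero, Real.exp_zero]
  ring

/-- Purely real arithmetic key inequality: if `a² = r² + m²`, `a ≥ 0`,
`2s = a + r`, and `a - r ≤ D` with `D > 0`, then `m² ≤ 2·D·s`. -/
lemma aux_key_ineq (a r m s D : ℝ) (hm : 0 < m) (hsq : a ^ 2 = r ^ 2 + m ^ 2)
    (ha : 0 ≤ a) (hid : 2 * s = a + r) (hD : a - r ≤ D) :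
    m ^ 2 ≤ 2 * D * s := by
  have h1 : |r| < a := by nlinarith [sq_abs r, abs_nonneg r]
  have h2 : 0 < a + r := by linarith [neg_le_abs r]
  nlinarith [mul_le_mul_of_nonneg_right hD h2.le]

/-- For `k ∈ ℂ` with `Re k > 0`, `Im k > 0`, `α ∈ ℂ` with `Im α ≥ 0`, and
`y, y₀ ≥ 0`, the function `(λ, η) ↦ e^{−γ(λ)(y+y₀+η)}·e^{iαη}/γ(λ)` is
Lebesgue integrable on `ℝ × (0, ∞)` with respect to the product measure. -/
theorem image_ray_jointly_integrable (k α : ℂ)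
    (hk_re : 0 < k.re) (hk_im : 0 < k.im) (hα : 0 ≤ α.im)
    (y y₀ : ℝ) (hy : 0 ≤ y) (hy₀ : 0 ≤ y₀)
    (γ : ℝ → ℂ) (hγ : ∀ l : ℝ, γ l = ((l : ℂ) ^ 2 - k ^ 2) ^ ((1 : ℂ) / 2)) :
    IntegrableOn (fun p : ℝ × ℝ =>
      Complex.exp (-γ p.1 * (y + y₀ + p.2)) *
        Complex.exp (Complex.I * α * p.2) / γ p.1)
      (Set.univ ×ˢ Set.Ioi (0 : ℝ)) := by
  set m : ℝ := 2 * k.re * k.im with hm_def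
  have hm : 0 < m := by positivity
  have hzim : ∀ l : ℝ, ((l : ℂ) ^ 2 - k ^ 2).im = -m := by
    intro l
    simp [pow_two, Complex.mul_im, hm_def]
    ring
  have hzre : ∀ l : ℝ, ((l : ℂ) ^ 2 - k ^ 2).re = l ^ 2 - k.re ^ 2 + k.im ^ 2 := by
    intro l
    simp [pow_two, Complex.mul_re]
    ring
  have hz0 : ∀ l : ℝ, ((l : ℂ) ^ 2 - k ^ 2) ≠ 0 := by
    intro l h
    have h2 := hzim l
    rw [h] at h2
    simp only [Complex.zero_im] at h2
    linarith
  have hγ0 : ∀ l : ℝ, γ l ≠ 0 := by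
    intro l h
    rw [hγ l, Complex.cpow_eq_zero_iff] at h
    exact hz0 l h.1
  have hsq : ∀ l : ℝ, (γ l) ^ 2 = (l : ℂ) ^ 2 - k ^ 2 := by
    intro l
    rw [hγ l, pow_two, ← Complex.cpow_add _ _ (hz0 l)]
    norm_num
  have hre_pos : ∀ l : ℝ, 0 < (γ l).re := by
    intro l
    rw [hγ l, Complex.cpow_def_of_ne_zero (hz0 l), Complex.exp_re]
    apply mul_pos (Real.exp_pos _)
    apply Real.cos_pos_of_mem_Ioo
    have harg_neg : Complex.arg ((l : ℂ) ^ 2 - k ^ 2) < 0 :=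
      Complex.arg_neg_iff.mpr (by rw [hzim l]; linarith)
    have harg_lb : -Real.pi < Complex.arg ((l : ℂ) ^ 2 - k ^ 2) :=
      Complex.neg_pi_lt_arg _
    have him : (Complex.log ((l : ℂ) ^ 2 - k ^ 2) * ((1 : ℂ) / 2)).im
        = Complex.arg ((l : ℂ) ^ 2 - k ^ 2) / 2 := by
      simp [Complex.mul_im, Complex.log_im]
      ring
    rw [him]
    constructor
    · linarith [Real.pi_pos]
    · linarith [Real.pi_pos]
  have habs : ∀ l : ℝ, ‖((l : ℂ) ^ 2 - k ^ 2)‖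
      = (γ l).re ^ 2 + (γ l).im ^ 2 := by
    intro l
    rw [← hsq l, norm_pow, Complex.sq_norm, Complex.normSq_apply]
    ring
  have hre_id : ∀ l : ℝ, 2 * (γ l).re ^ 2
      = ‖((l : ℂ) ^ 2 - k ^ 2)‖ + (l ^ 2 - k.re ^ 2 + k.im ^ 2) := by
    intro l
    have h1 : l ^ 2 - k.re ^ 2 + k.im ^ 2 = (γ l).re ^ 2 - (γ l).im ^ 2 := by
      rw [← hzre l, ← hsq l]
      simp [pow_two, Complex.mul_re]
    rw [habs l, h1]
    ring
  set B : ℝ := k.re ^ 2 + k.im ^ 2 + m + 1 with hB_def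
  set T : ℝ := max 1 (2 * k.re ^ 2) with hT_def
  have hB1 : 1 ≤ B := by linarith [sq_nonneg k.re, sq_nonneg k.im]
  have hT1 : 1 ≤ T := le_max_left _ _
  have hTB : 0 < T + B := by linarith
  have hT1' : (0 : ℝ) < T + 1 := by linarith
  have hden : 0 < 4 * (T + B) * (T + 1) := by linarith [mul_pos hTB hT1']
  set c : ℝ := min (1 / 4) (m ^ 2 / (4 * (T + B) * (T + 1))) with hc_def
  have hc : 0 < c := lt_min (by norm_num) (div_pos (by positivity) hden)
  have hkey : ∀ l : ℝ, c * (l ^ 2 + 1) ≤ (γ l).re ^ 2 := by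
    intro l
    have hid := hre_id l
    have habs_ge_re : l ^ 2 - k.re ^ 2 + k.im ^ 2 ≤ ‖((l : ℂ) ^ 2 - k ^ 2)‖ := by
      rw [← hzre l]; exact Complex.re_le_norm _
    rcases le_or_gt T (l ^ 2) with hl | hl
    · have h2 : 2 * k.re ^ 2 ≤ l ^ 2 := le_trans (le_max_right _ _) hl
      have h3 : 1 ≤ l ^ 2 := le_trans (le_max_left _ _) hl
      have hc4 : c ≤ 1 / 4 := min_le_left _ _
      have hmul : c * (l ^ 2 + 1) ≤ (1 / 4) * (l ^ 2 + 1) :=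
        mul_le_mul_of_nonneg_right hc4 (by positivity)
      linarith [sq_nonneg k.im, hmul, hid, habs_ge_re]
    · have hlT : l ^ 2 ≤ T := hl.le
      have hsq_abs : (‖((l : ℂ) ^ 2 - k ^ 2)‖) ^ 2
          = (l ^ 2 - k.re ^ 2 + k.im ^ 2) ^ 2 + m ^ 2 := by
        rw [Complex.sq_norm, Complex.normSq_apply, hzim l, hzre l]
        ring
      have ha_nonneg : 0 ≤ ‖((l : ℂ) ^ 2 - k ^ 2)‖ := norm_nonneg _
      have habs_le : ‖((l : ℂ) ^ 2 - k ^ 2)‖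
          ≤ |l ^ 2 - k.re ^ 2 + k.im ^ 2| + m := by
        have h := Complex.norm_le_abs_re_add_abs_im ((l : ℂ) ^ 2 - k ^ 2)
        rw [hzim l, hzre l] at h
        rw [abs_neg, abs_of_pos hm] at h
        exact h
      have hre_abs : |l ^ 2 - k.re ^ 2 + k.im ^ 2| ≤ T + k.re ^ 2 + k.im ^ 2 := by
        rw [abs_le]
        constructor <;> linarith [sq_nonneg l, sq_nonneg k.re, sq_nonneg k.im]
      have hD : ‖((l : ℂ) ^ 2 - k ^ 2)‖ - (l ^ 2 - k.re ^ 2 + k.im ^ 2)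
          ≤ 2 * (T + B) := by
        linarith [habs_le, hre_abs, neg_le_abs (l ^ 2 - k.re ^ 2 + k.im ^ 2), hm]
      have h_sum : m ^ 2 ≤ 2 * (2 * (T + B)) * ((γ l).re ^ 2) :=
        aux_key_ineq _ _ _ _ _ hm hsq_abs ha_nonneg hid hD
      have hcm : c * (4 * (T + B) * (T + 1)) ≤ m ^ 2 :=
        (le_div_iff₀ hden).mp (min_le_right _ _)
      have hP : (0 : ℝ) < 4 * (T + B) := by linarith
      have hfin : c * (T + 1) ≤ (γ l).re ^ 2 := by
        have h6 : 4 * (T + B) * (c * (T + 1)) ≤ 4 * (T + B) * ((γ l).re ^ 2) := by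
          calc 4 * (T + B) * (c * (T + 1)) = c * (4 * (T + B) * (T + 1)) := by ring
            _ ≤ m ^ 2 := hcm
            _ ≤ 4 * (T + B) * ((γ l).re ^ 2) := by linarith [h_sum]
        exact le_of_mul_le_mul_left h6 hP
      have : c * (l ^ 2 + 1) ≤ c * (T + 1) :=
        mul_le_mul_of_nonneg_left (by linarith) hc.le
      linarith
  -- Continuity
  have hγcont : Continuous γ := by
    have hγ' : γ = fun l : ℝ => ((l : ℂ) ^ 2 - k ^ 2) ^ ((1 : ℂ) / 2) := funext hγ
    rw [hγ']
    apply Continuous.cpow ((Complex.continuous_ofReal.pow 2).sub continuous_const) continuous_const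
    intro l
    rw [Complex.mem_slitPlane_iff]
    right
    show ((l : ℂ) ^ 2 - k ^ 2).im ≠ 0
    rw [hzim l]
    intro h
    simp at h
    linarith
  have hf_cont : Continuous (fun p : ℝ × ℝ =>
      Complex.exp (-γ p.1 * (y + y₀ + p.2)) *
        Complex.exp (Complex.I * α * p.2) / γ p.1) := by
    apply Continuous.div _ (hγcont.comp continuous_fst) (fun p => hγ0 p.1)
    apply Continuous.mul
    · exact Complex.continuous_exp.comp
        (((hγcont.comp continuous_fst).neg).mul
          (continuous_const.add (Complex.continuous_ofReal.comp continuous_snd)))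
    · exact Complex.continuous_exp.comp
        (continuous_const.mul (Complex.continuous_ofReal.comp continuous_snd))
  -- Norm formula
  have hnorm_eq : ∀ l η : ℝ,
      ‖Complex.exp (-γ l * (y + y₀ + η)) * Complex.exp (Complex.I * α * η) / γ l‖
        = Real.exp (-(γ l).re * (y + y₀ + η)) * Real.exp (-α.im * η)
            / ‖γ l‖ := by
    intro l η
    rw [norm_div, norm_mul, Complex.norm_exp, Complex.norm_exp]
    congr 2
    · simp [Complex.mul_re, Complex.add_re, Complex.add_im, Complex.neg_re,
        Complex.neg_im, Complex.ofReal_re, Complex.ofReal_im]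
      try ring
    · simp [Complex.mul_re, Complex.mul_im, Complex.I_re, Complex.I_im,
        Complex.ofReal_re, Complex.ofReal_im]
      try ring
  have habs_pos : ∀ l : ℝ, 0 < ‖γ l‖ := fun l => norm_pos_iff.mpr (hγ0 l)
  -- Pointwise bound on the norm
  have hbound : ∀ l : ℝ, ∀ η ∈ Set.Ioi (0 : ℝ),
      ‖Complex.exp (-γ l * (y + y₀ + η)) * Complex.exp (Complex.I * α * η) / γ l‖
        ≤ Real.exp (-(γ l).re * η) / ‖γ l‖ := by
    intro l η hη
    rw [hnorm_eq l η]
    apply div_le_div_of_nonneg_right (c := ‖γ l‖) _ (habs_pos l).le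
    have hη0 : 0 < η := hη
    have e1 : Real.exp (-(γ l).re * (y + y₀ + η)) ≤ Real.exp (-(γ l).re * η) := by
      apply Real.exp_le_exp.mpr
      have h := mul_le_mul_of_nonneg_left (show η ≤ y + y₀ + η by linarith)
        (hre_pos l).le
      linarith
    have e2 : Real.exp (-α.im * η) ≤ 1 := by
      rw [Real.exp_le_one_iff]
      exact mul_nonpos_iff.mpr (Or.inr ⟨neg_nonpos.mpr hα, hη0.le⟩)
    calc Real.exp (-(γ l).re * (y + y₀ + η)) * Real.exp (-α.im * η)
        ≤ Real.exp (-(γ l).re * η) * 1 :=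
          mul_le_mul e1 e2 (Real.exp_pos _).le (Real.exp_pos _).le
      _ = Real.exp (-(γ l).re * η) := mul_one _
  -- Slice integrability
  have hslice : ∀ l : ℝ, IntegrableOn (fun η : ℝ =>
      Complex.exp (-γ l * (y + y₀ + η)) * Complex.exp (Complex.I * α * η) / γ l)
      (Set.Ioi (0 : ℝ)) := by
    intro l
    apply Integrable.mono'
      ((exp_neg_integrableOn_Ioi 0 (hre_pos l)).div_const (‖γ l‖))
    · exact ((hf_cont.comp (Continuous.prodMk_right l)).aestronglyMeasurable).restrict
    · exact (ae_restrict_iff' measurableSet_Ioi).mpr (ae_of_all _ (hbound l))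
  -- Inner integral bound
  have hIbound : ∀ l : ℝ,
      (∫ η in Set.Ioi (0 : ℝ),
        ‖Complex.exp (-γ l * (y + y₀ + η)) * Complex.exp (Complex.I * α * η) / γ l‖)
        ≤ 1 / ((γ l).re * ‖γ l‖) := by
    intro l
    have hg_int : IntegrableOn
        (fun η : ℝ => Real.exp (-(γ l).re * η) / ‖γ l‖)
        (Set.Ioi (0 : ℝ)) :=
      (exp_neg_integrableOn_Ioi 0 (hre_pos l)).div_const (‖γ l‖)
    have h1 := setIntegral_mono_on ((hslice l).norm) hg_int measurableSet_Ioi (hbound l)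
    have h2 : (∫ η in Set.Ioi (0 : ℝ), Real.exp (-(γ l).re * η) / ‖γ l‖)
        = 1 / ((γ l).re * ‖γ l‖) := by
      rw [integral_div, aux_integral_exp_neg_mul_Ioi (hre_pos l), div_div]
    rw [h2] at h1
    exact h1
  -- Assemble
  rw [IntegrableOn, Measure.volume_eq_prod, ← Measure.prod_restrict,
    Measure.restrict_univ]
  have hmeas : AEStronglyMeasurable (fun p : ℝ × ℝ =>
      Complex.exp (-γ p.1 * (y + y₀ + p.2)) *
        Complex.exp (Complex.I * α * p.2) / γ p.1)
      (volume.prod (volume.restrict (Set.Ioi 0))) :=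
    hf_cont.aestronglyMeasurable
  rw [integrable_prod_iff hmeas]
  constructor
  · exact ae_of_all _ (fun l => hslice l)
  · apply Integrable.mono' (integrable_inv_one_add_sq.const_mul (1 / c))
      (hmeas.norm.integral_prod_right')
    apply ae_of_all
    intro l
    have hnn : 0 ≤ ∫ η in Set.Ioi (0 : ℝ),
        ‖Complex.exp (-γ l * (y + y₀ + η)) * Complex.exp (Complex.I * α * η) / γ l‖ :=
      integral_nonneg (fun η => norm_nonneg _)
    rw [Real.norm_eq_abs, abs_of_nonneg hnn]
    have hstep : c * (l ^ 2 + 1) ≤ (γ l).re * ‖γ l‖ := by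
      have h1 : (γ l).re * (γ l).re ≤ (γ l).re * ‖γ l‖ :=
        mul_le_mul_of_nonneg_left (Complex.re_le_norm _) (hre_pos l).le
      calc c * (l ^ 2 + 1) ≤ (γ l).re ^ 2 := hkey l
        _ = (γ l).re * (γ l).re := by rw [pow_two]
        _ ≤ (γ l).re * ‖γ l‖ := h1
    have hpos : 0 < c * (l ^ 2 + 1) := by positivity
    have h3 : 1 / ((γ l).re * ‖γ l‖) ≤ 1 / (c * (l ^ 2 + 1)) :=
      one_div_le_one_div_of_le hpos hstep
    have h4 : 1 / (c * (l ^ 2 + 1)) = 1 / c * (1 + l ^ 2)⁻¹ := by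
      rw [one_div, mul_inv, one_div, add_comm]
    calc (∫ η in Set.Ioi (0 : ℝ),
        ‖Complex.exp (-γ l * (y + y₀ + η)) * Complex.exp (Complex.I * α * η) / γ l‖)
        ≤ 1 / ((γ l).re * ‖γ l‖) := hIbound l
      _ ≤ 1 / (c * (l ^ 2 + 1)) := h3
      _ = 1 / c * (1 + l ^ 2)⁻¹ := h4
end
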